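/- arXiv:1910.03463 — 5 statements merged into one kernel-verified Lean document; each statement's English description precedes it below -/
import Mathlib

section
/- Let N ≥ 1, let φ_k(x) = r_k x + b_k for 0 ≤ k ≤ N be real affine maps with r_k > 0, let p ∈ C_N with Σ_{j=0}^N p_j log r_j < 0, and let ν be the invariant measure. Then ν has an atom if and only if the maps φ_0,…,φ_N have a common fixed point c, and in that case ν is the Dirac mass δ_c. -/
/-!
If the maps have a common fixed point `c`, then `G t = ν {x | t < |x - c|}` satisfies
`G t = ∑ p_j G (t / r_j)`. Since `∑ p_j log r_j < 0` there is `ε > 0` with `ρ = ∑ p_j r_j ^ ε < 1`,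
so `(T / t) ^ ε` is a strict supersolution; comparing `G` with it on `t ≥ T`, where `G` is small,
and iterating gives `G ≤ η + ρ ^ n (T / t) ^ ε` for all `n`, hence `G = 0` and `ν = δ_c`.

If `ν` has an atom, it has finitely many atoms of maximal mass. At such an atom `x` the
self-similarity equation `ν {x} = ∑ p_j ν {φ_j⁻¹ x}` averages masses that are at most `ν {x}`,
so every `φ_j⁻¹ x` is again a heaviest atom. An increasing map sending a finite set into itself
fixes its least element, which is therefore a common fixed point.
-/

open MeasureTheory Filter Finset Metric Topology

theorem Finset.apply_min'_eq_of_strictMono_of_mapsTo {α : Type*} [LinearOrder α] {f : α → α}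
    (hf : StrictMono f) {s : Finset α} (hs : s.Nonempty) (hfs : ∀ x ∈ s, f x ∈ s) :
    f (s.min' hs) = s.min' hs := by
  have himage : s.image f = s :=
    eq_of_subset_of_card_le (image_subset_iff.mpr hfs) (card_image_of_injective s hf.injective).ge
  rw [hf.monotone.map_finset_min' hs]
  simp_rw [himage]

theorem exists_pos_sum_mul_rpow_lt_one {ι : Type*} [Fintype ι] {p r : ι → ℝ}
    (hr : ∀ j, 0 < r j) (hp1 : ∑ j, p j = 1) (hlog : ∑ j, p j * Real.log (r j) < 0) :
    ∃ ε : ℝ, 0 < ε ∧ ∑ j, p j * r j ^ ε < 1 := by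
  set f : ℝ → ℝ := fun ε => ∑ j, p j * r j ^ ε
  have hderiv : HasDerivAt f (∑ j, p j * Real.log (r j)) 0 := by
    have := HasDerivAt.fun_sum (u := univ) fun j _ =>
      ((Real.hasStrictDerivAt_const_rpow (hr j) 0).hasDerivAt.const_mul (p j))
    simpa only [Real.rpow_zero, one_mul] using this
  have hf0 : f 0 = 1 := by simp [f, hp1]
  obtain ⟨ε, hslope, hε⟩ :=
    ((hderiv.hasDerivWithinAt.liminf_right_slope_le hlog).and_eventually
      self_mem_nhdsWithin).exists
  refine ⟨ε, hε, ?_⟩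
  rw [slope_def_field, hf0, sub_zero] at hslope
  linarith [(div_lt_iff₀ hε).mp hslope]

theorem nonpos_of_eq_sum_mul_comp_div {ι : Type*} [Fintype ι] {p r : ι → ℝ}
    (hp : ∀ j, 0 ≤ p j) (hr : ∀ j, 0 < r j) (hp1 : ∑ j, p j = 1)
    (hlog : ∑ j, p j * Real.log (r j) < 0) {G : ℝ → ℝ} (hG1 : ∀ t, G t ≤ 1)
    (hG : ∀ t > 0, G t = ∑ j, p j * G (t / r j)) (hlim : Tendsto G atTop (𝓝 0))
    {t : ℝ} (ht : 0 < t) : G t ≤ 0 := by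
  obtain ⟨ε, hε, hρ⟩ := exists_pos_sum_mul_rpow_lt_one hr hp1 hlog
  set ρ := ∑ j, p j * r j ^ ε
  refine le_of_forall_gt_imp_ge_of_dense fun η hη => ?_
  obtain ⟨T, hT⟩ := (hlim.eventually (eventually_le_nhds hη)).exists_forall_of_atTop
  set T' := max T 1
  -- `s ↦ (T' / s) ^ ε` is a barrier: averaging it over the maps multiplies it by `ρ < 1`.
  have hbarrier : ∀ n : ℕ, ∀ s > 0, G s ≤ η + ρ ^ n * (T' / s) ^ ε := by
    intro n
    induction n with
    | zero =>
      intro s hs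
      rcases le_or_gt T' s with hTs | hsT
      · have hGs := hT s ((le_max_left _ _).trans hTs)
        have hnonneg : 0 ≤ (T' / s) ^ ε := by positivity
        simp only [pow_zero, one_mul]
        linarith
      · have hone : 1 ≤ (T' / s) ^ ε := Real.one_le_rpow ((one_le_div hs).mpr hsT.le) hε.le
        linarith [hG1 s]
    | succ n ih =>
      intro s hs
      have hscale : ∀ j, (T' / (s / r j)) ^ ε = r j ^ ε * (T' / s) ^ ε := fun j => by
        rw [← Real.mul_rpow (hr j).le (by positivity)]
        congr 1
        field_simp
      calc G s = ∑ j, p j * G (s / r j) := hG s hs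
        _ ≤ ∑ j, p j * (η + ρ ^ n * (T' / (s / r j)) ^ ε) :=
          sum_le_sum fun j _ => mul_le_mul_of_nonneg_left (ih _ (div_pos hs (hr j))) (hp j)
        _ = η + ρ ^ (n + 1) * (T' / s) ^ ε := by
          have hterm : ∀ j, p j * (η + ρ ^ n * (T' / (s / r j)) ^ ε)
              = p j * η + ρ ^ n * (T' / s) ^ ε * (p j * r j ^ ε) := fun j => by
            rw [hscale]; ring
          simp only [hterm, sum_add_distrib, ← sum_mul, ← mul_sum, hp1]
          ring
  have hlimit : Tendsto (fun n : ℕ => η + ρ ^ n * (T' / t) ^ ε) atTop (𝓝 (η + 0 * (T' / t) ^ ε)) :=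
    tendsto_const_nhds.add ((tendsto_pow_atTop_nhds_zero_of_lt_one
      (sum_nonneg fun j _ => mul_nonneg (hp j) (Real.rpow_nonneg (hr j).le ε)) hρ).mul_const _)
  simpa using ge_of_tendsto' hlimit fun n => hbarrier n t ht

theorem measureReal_eq_sum_mul_measureReal_preimage {α ι : Type*} [MeasurableSpace α] [Fintype ι]
    {ν : Measure α} [IsFiniteMeasure ν] {p : ι → ℝ} (hp : ∀ j, 0 ≤ p j) {φ : ι → α → α}
    (hφ : ∀ j, Measurable (φ j)) (hν : ν = ∑ j, ENNReal.ofReal (p j) • ν.map (φ j))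
    {s : Set α} (hs : MeasurableSet s) : ν.real s = ∑ j, p j * ν.real (φ j ⁻¹' s) := by
  have h : ν s = ∑ j, ENNReal.ofReal (p j) * ν (φ j ⁻¹' s) := by
    conv_lhs => rw [hν]
    simp only [Measure.coe_finsetSum, Finset.sum_apply, Measure.smul_apply, smul_eq_mul,
      Measure.map_apply (hφ _) hs]
  rw [measureReal_def, h, ENNReal.toReal_sum fun j _ => by finiteness]
  simp only [ENNReal.toReal_mul, ENNReal.toReal_ofReal (hp _), measureReal_def]

theorem preimage_affine_compl_closedBall {r b c : ℝ} (hr : 0 < r) (hc : r * c + b = c) (t : ℝ) :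
    (fun x => r * x + b) ⁻¹' (closedBall c t)ᶜ = (closedBall c (t / r))ᶜ := by
  ext x
  have hdist : dist (r * x + b) c = r * dist x c := by
    rw [Real.dist_eq, Real.dist_eq, show r * x + b - c = r * (x - c) by linear_combination hc,
      abs_mul, abs_of_pos hr]
  simp only [Set.mem_preimage, Set.mem_compl_iff, mem_closedBall, not_le, hdist,
    div_lt_iff₀' hr]

theorem preimage_affine_singleton {r b : ℝ} (hr : r ≠ 0) (x : ℝ) :
    (fun y => r * y + b) ⁻¹' {x} = {(x - b) / r} := by
  ext y
  simp only [Set.mem_preimage, Set.mem_singleton_iff, eq_div_iff hr]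
  constructor <;> intro h <;> linarith

theorem tendsto_measureReal_compl_closedBall {α : Type*} [MeasurableSpace α] [PseudoMetricSpace α]
    [CompleteSpace α] [SecondCountableTopology α] [BorelSpace α] (ν : Measure α)
    [IsFiniteMeasure ν] (c : α) :
    Tendsto (fun t => ν.real (closedBall c t)ᶜ) atTop (𝓝 0) := by
  have h := tendsto_measure_compl_closedBall_of_isTightMeasureSet
    (isTightMeasureSet_singleton (μ := ν)) c
  simp only [Set.mem_singleton_iff, iSup_iSup_eq_left] at h
  simpa [Function.comp_def, measureReal_def] using
    (ENNReal.tendsto_toReal ENNReal.zero_ne_top).comp h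

theorem eq_dirac_of_measure_compl_singleton_eq_zero {α : Type*} [MeasurableSpace α]
    [MeasurableSingletonClass α] {ν : Measure α} [IsProbabilityMeasure ν] {c : α}
    (h : ν {c}ᶜ = 0) : ν = Measure.dirac c := by
  have hc : ν {c} = 1 := (prob_compl_eq_zero_iff (measurableSet_singleton c)).mp h
  calc ν = ν.restrict {c} := (Measure.restrict_eq_self_of_ae_mem (mem_ae_iff.mpr h)).symm
    _ = Measure.dirac c := by rw [Measure.restrict_singleton, hc, one_smul]

theorem eq_dirac_of_forall_affine_apply_eq {ι : Type*} [Fintype ι] {r b p : ι → ℝ}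
    (hr : ∀ k, 0 < r k) (hp : ∀ j, 0 ≤ p j) (hp1 : ∑ j, p j = 1)
    (hlog : ∑ j, p j * Real.log (r j) < 0) {ν : Measure ℝ} [IsProbabilityMeasure ν]
    (hν : ν = ∑ j, ENNReal.ofReal (p j) • ν.map (fun x => r j * x + b j))
    {c : ℝ} (hc : ∀ k, r k * c + b k = c) : ν = Measure.dirac c := by
  have htail : ∀ t > 0, ν (closedBall c t)ᶜ = 0 := fun t ht => by
    refine (measureReal_eq_zero_iff (by finiteness)).mp (le_antisymm ?_ measureReal_nonneg)
    refine nonpos_of_eq_sum_mul_comp_div hp hr hp1 hlog (fun _ => measureReal_le_one)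
      (fun s _ => ?_) (tendsto_measureReal_compl_closedBall ν c) ht
    rw [measureReal_eq_sum_mul_measureReal_preimage hp (fun j => by fun_prop) hν
      measurableSet_closedBall.compl]
    simp only [preimage_affine_compl_closedBall (hr _) (hc _)]
  refine eq_dirac_of_measure_compl_singleton_eq_zero (measure_mono_null ?_
    (measure_iUnion_null fun n : ℕ => htail (1 / (n + 1)) Nat.one_div_pos_of_nat))
  intro x hx
  obtain ⟨n, hn⟩ := exists_nat_one_div_lt (dist_pos.mpr hx)
  exact Set.mem_iUnion.mpr ⟨n, by simpa using hn⟩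

theorem finite_setOf_le_measure_singleton {α : Type*} [MeasurableSpace α]
    [MeasurableSingletonClass α] (ν : Measure α) [IsFiniteMeasure ν] {ε : ENNReal} (hε : 0 < ε) :
    {x : α | ε ≤ ν {x}}.Finite :=
  Measure.finite_const_le_meas_of_disjoint_iUnion ν hε measurableSet_singleton
    (fun _ _ hxy => Set.disjoint_singleton.mpr hxy) (measure_ne_top ν _)

theorem exists_forall_measure_singleton_le {α : Type*} [MeasurableSpace α]
    [MeasurableSingletonClass α] {ν : Measure α} [IsFiniteMeasure ν] {x₀ : α}
    (hx₀ : ν {x₀} ≠ 0) : ∃ m, ∀ x, ν {x} ≤ ν {m} := by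
  obtain ⟨m, hm₀, hm⟩ := Set.exists_max_image _ (fun x => ν {x})
    (finite_setOf_le_measure_singleton ν (pos_iff_ne_zero.mpr hx₀)) ⟨x₀, le_refl (ν {x₀})⟩
  refine ⟨m, fun x => ?_⟩
  by_cases hx : ν {x₀} ≤ ν {x}
  · exact hm x hx
  · exact (not_le.mp hx).le.trans hm₀

theorem measure_singleton_div_eq_of_forall_le {ι : Type*} [Fintype ι] {r b p : ι → ℝ}
    (hr : ∀ k, 0 < r k) (hp : ∀ j, 0 < p j) (hp1 : ∑ j, p j = 1) {ν : Measure ℝ}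
    [IsFiniteMeasure ν] (hν : ν = ∑ j, ENNReal.ofReal (p j) • ν.map (fun x => r j * x + b j))
    {x : ℝ} (hmax : ∀ y, ν {y} ≤ ν {x}) (k : ι) : ν {(x - b k) / r k} = ν {x} := by
  have hself : ν.real {x} = ∑ j, p j * ν.real {(x - b j) / r j} := by
    rw [measureReal_eq_sum_mul_measureReal_preimage (fun j => (hp j).le) (fun j => by fun_prop)
      hν (measurableSet_singleton x)]
    simp only [preimage_affine_singleton (hr _).ne']
  have hle : ∀ j ∈ univ, p j * ν.real {(x - b j) / r j} ≤ p j * ν.real {x} := fun j _ =>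
    mul_le_mul_of_nonneg_left (ENNReal.toReal_mono (by finiteness) (hmax _)) (hp j).le
  have hsum : ∑ j, p j * ν.real {(x - b j) / r j} = ∑ j, p j * ν.real {x} := by
    rw [← sum_mul, hp1, one_mul, hself]
  have hk := (sum_eq_sum_iff_of_le hle).mp hsum k (mem_univ k)
  exact (measureReal_eq_measureReal_iff).mp (mul_left_cancel₀ (hp k).ne' hk)

theorem exists_forall_affine_apply_eq_of_measure_singleton_ne_zero {ι : Type*} [Fintype ι]
    {r b p : ι → ℝ} (hr : ∀ k, 0 < r k) (hp : ∀ j, 0 < p j) (hp1 : ∑ j, p j = 1)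
    {ν : Measure ℝ} [IsFiniteMeasure ν]
    (hν : ν = ∑ j, ENNReal.ofReal (p j) • ν.map (fun x => r j * x + b j))
    {x₀ : ℝ} (hx₀ : ν {x₀} ≠ 0) : ∃ c, ∀ k, r k * c + b k = c := by
  obtain ⟨m, hm⟩ := exists_forall_measure_singleton_le hx₀
  set A := (finite_setOf_le_measure_singleton ν
    ((pos_iff_ne_zero.mpr hx₀).trans_le (hm x₀))).toFinset
  have hA : A.Nonempty := ⟨m, by simp [A]⟩
  have hmaps : ∀ k, ∀ x ∈ A, (x - b k) / r k ∈ A := fun k x hx => by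
    simp only [A, Set.Finite.mem_toFinset, Set.mem_ofPred_eq] at hx ⊢
    have hxmax : ∀ y, ν {y} ≤ ν {x} := fun y => (hm y).trans hx
    rw [measure_singleton_div_eq_of_forall_le hr hp hp1 hν hxmax k]
    exact hx
  refine ⟨A.min' hA, fun k => ?_⟩
  have hfix := A.apply_min'_eq_of_strictMono_of_mapsTo
    (fun _ _ h => div_lt_div_of_pos_right (sub_lt_sub_right h _) (hr k)) hA (hmaps k)
  rw [div_eq_iff (hr k).ne'] at hfix
  linarith

theorem stmt1_general {N : ℕ} (r b p : Fin (N + 1) → ℝ)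
    (hr : ∀ k, 0 < r k) (hp : ∀ j, 0 < p j) (hp1 : ∑ j, p j = 1)
    (hcontr : ∑ j, p j * Real.log (r j) < 0)
    (ν : Measure ℝ) [IsProbabilityMeasure ν]
    (hν : ν = ∑ j, ENNReal.ofReal (p j) • ν.map (fun x => r j * x + b j)) :
    ((∃ x : ℝ, ν {x} ≠ 0) ↔ ∃ c : ℝ, ∀ k, r k * c + b k = c) ∧
      (∀ c : ℝ, (∀ k, r k * c + b k = c) → ν = Measure.dirac c) := by
  have hdirac : ∀ c : ℝ, (∀ k, r k * c + b k = c) → ν = Measure.dirac c := fun c hc =>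
    eq_dirac_of_forall_affine_apply_eq hr (fun j => (hp j).le) hp1 hcontr hν hc
  refine ⟨⟨fun ⟨_, hx₀⟩ => ?_, fun ⟨c, hc⟩ => ⟨c, by simp [hdirac c hc]⟩⟩, hdirac⟩
  exact exists_forall_affine_apply_eq_of_measure_singleton_ne_zero hr hp hp1 hν hx₀

/-- The invariant measure `ν` of the affine IFS `φ k x = r k * x + b k`
(with `p ∈ C_N` and `∑ p j * log r j < 0`) has an atom if and only if the maps have a
common fixed point `c`, and in that case `ν` is the Dirac mass at `c`. -/
theorem stmt1 {N : ℕ} (hN : 1 ≤ N) (r b p : Fin (N + 1) → ℝ)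
    (hr : ∀ k, 0 < r k) (hp : ∀ j, 0 < p j) (hp1 : ∑ j, p j = 1)
    (hcontr : ∑ j, p j * Real.log (r j) < 0)
    (ν : Measure ℝ) [IsProbabilityMeasure ν]
    (hν : ν = ∑ j, ENNReal.ofReal (p j) • ν.map (fun x => r j * x + b j)) :
    ((∃ x : ℝ, ν {x} ≠ 0) ↔ ∃ c : ℝ, ∀ k, r k * c + b k = c) ∧
      (∀ c : ℝ, (∀ k, r k * c + b k = c) → ν = Measure.dirac c) :=
  stmt1_general r b p hr hp hp1 hcontr ν hν
end

section
/- Let N ≥ 1, let φ_k(x) = r_k x + b_k for 0 ≤ k ≤ N be real affine maps with r_k > 0, let p ∈ C_N with Σ_{j=0}^N p_j log r_j < 0, and let ν be the invariant measure. If ν is absolutely continuous with respect to Lebesgue measure on ℝ with an essentially bounded density f, then p_j ≤ r_j for every 0 ≤ j ≤ N. -/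
/-!
Since `ν ≥ p_j • (φ_j)_* ν`, the image `φ_jⁿ(S)` of any set `S` has `ν`-mass at least
`p_jⁿ ν(S)`, while its Lebesgue measure is `r_jⁿ |S|`. A density bounded by `C` forces
`p_jⁿ ν(S) ≤ C r_jⁿ |S|` for all `n`; taking `S` of finite Lebesgue measure with `ν(S) > 0`
gives `p_j ≤ r_j`.
-/

open MeasureTheory Filter Finset
open scoped ENNReal Topology

theorem ENNReal.le_of_forall_pow_mul_le_pow_mul {q a x K : ℝ≥0∞} (hx : x ≠ 0) (hK : K ≠ ∞)
    (h : ∀ n : ℕ, q ^ n * x ≤ a ^ n * K) : q ≤ a := by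
  by_contra! haq
  have ha_top : a ≠ ∞ := haq.ne_top
  rcases eq_or_ne a 0 with rfl | ha0
  · simpa [haq.ne', hx] using h 1
  have ht : 1 < q / a :=
    (ENNReal.lt_div_iff_mul_lt (.inl ha0) (.inl ha_top)).2 (by rwa [one_mul])
  have hbound : ∀ n : ℕ, (q / a) ^ n * x ≤ K := fun n => by
    rw [← ENNReal.mul_le_mul_iff_right (pow_ne_zero n ha0) (ENNReal.pow_ne_top ha_top),
      ← mul_assoc, ← mul_pow, ENNReal.mul_div_cancel ha0 ha_top]
    exact h n
  have hlim : Tendsto (fun n : ℕ => (q / a) ^ n * x) atTop (𝓝 ∞) := by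
    simpa [ENNReal.top_mul hx] using ENNReal.Tendsto.mul_const (b := x)
      (ENNReal.tendsto_pow_atTop_nhds_top_iff.2 ht) (.inl ENNReal.top_ne_zero)
  obtain ⟨n, hn⟩ := (hlim.eventually (eventually_gt_nhds hK.lt_top)).exists
  exact (hbound n).not_gt hn

namespace MeasureTheory.Measure

variable {α : Type*} [MeasurableSpace α] {ν μ : Measure α} {g h : α → α} {q a : ℝ≥0∞}

theorem pow_mul_le_measure_preimage_iterate (hg : Measurable g) (hhg : Function.LeftInverse h g)
    (hνg : q • ν.map g ≤ ν) (s : Set α) (n : ℕ) : q ^ n * ν s ≤ ν (h^[n] ⁻¹' s) := by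
  induction n generalizing s with
  | zero => simp
  | succ n ih =>
    rw [Function.iterate_succ, Set.preimage_comp, pow_succ', mul_assoc]
    calc q * (q ^ n * ν s) ≤ q * ν (h^[n] ⁻¹' s) := by gcongr; exact ih s
      _ = q * ν (g ⁻¹' (h ⁻¹' (h^[n] ⁻¹' s))) := by
        rw [← Set.preimage_comp, hhg.comp_eq_id, Set.preimage_id]
      _ ≤ q * ν.map g (h ⁻¹' (h^[n] ⁻¹' s)) :=
        mul_le_mul_right (le_map_apply hg.aemeasurable _) q
      _ ≤ ν (h ⁻¹' (h^[n] ⁻¹' s)) := hνg _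

theorem measure_preimage_iterate_le (hh : Measurable h) (hμh : μ.map h ≤ a • μ) (s : Set α)
    (n : ℕ) : μ (h^[n] ⁻¹' s) ≤ a ^ n * μ s := by
  induction n generalizing s with
  | zero => simp
  | succ n ih =>
    rw [Function.iterate_succ, Set.preimage_comp, pow_succ', mul_assoc]
    calc μ (h ⁻¹' (h^[n] ⁻¹' s)) ≤ μ.map h (h^[n] ⁻¹' s) := le_map_apply hh.aemeasurable _
      _ ≤ a * μ (h^[n] ⁻¹' s) := hμh _
      _ ≤ a * (a ^ n * μ s) := by gcongr; exact ih s

theorem le_of_smul_map_le_of_map_le_smul [SigmaFinite μ] (hν : ν ≠ 0) (hg : Measurable g)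
    (hh : Measurable h) (hhg : Function.LeftInverse h g) (hνg : q • ν.map g ≤ ν)
    (hμh : μ.map h ≤ a • μ) {C : ℝ≥0∞} (hC : C ≠ ∞) (hνμ : ν ≤ C • μ) : q ≤ a := by
  obtain ⟨k, hk⟩ : ∃ k, 0 < ν (spanningSets μ k) :=
    exists_measure_pos_of_not_measure_iUnion_null (by simpa [iUnion_spanningSets] using hν)
  set s := spanningSets μ k
  refine ENNReal.le_of_forall_pow_mul_le_pow_mul hk.ne' (K := C * μ s)
    (ENNReal.mul_ne_top hC (measure_spanningSets_lt_top μ k).ne) fun n => ?_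
  calc q ^ n * ν s ≤ ν (h^[n] ⁻¹' s) := pow_mul_le_measure_preimage_iterate hg hhg hνg s n
    _ ≤ C * μ (h^[n] ⁻¹' s) := hνμ _
    _ ≤ C * (a ^ n * μ s) := by gcongr; exact measure_preimage_iterate_le hh hμh s n
    _ = a ^ n * (C * μ s) := mul_left_comm _ _ _

end MeasureTheory.Measure

theorem Real.map_volume_inv_mul_sub {r : ℝ} (hr : 0 < r) (b : ℝ) :
    (volume : Measure ℝ).map (fun x => r⁻¹ * (x - b)) = ENNReal.ofReal r • volume := by
  have hcomp : (fun x => r⁻¹ * (x - b)) = (r⁻¹ * ·) ∘ (· + -b) := by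
    funext x; simp [sub_eq_add_neg]
  rw [hcomp, ← Measure.map_map (measurable_const_mul _) (measurable_add_const _),
    map_add_right_eq_self, Real.map_volume_mul_left (inv_ne_zero hr.ne'), inv_inv,
    abs_of_pos hr]

theorem stmt2_general {N : ℕ} (r b p : Fin (N + 1) → ℝ)
    (hr : ∀ k, 0 < r k)
    (ν : Measure ℝ) [IsProbabilityMeasure ν]
    (hν : ν = ∑ j, ENNReal.ofReal (p j) • ν.map (fun x => r j * x + b j))
    (f : ℝ → ℝ≥0∞) (hdens : ν = volume.withDensity f)
    (hbdd : ∃ C : ℝ≥0∞, C ≠ ⊤ ∧ ∀ᵐ x ∂(volume : Measure ℝ), f x ≤ C) :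
    ∀ j, p j ≤ r j := by
  intro j
  obtain ⟨C, hC, hfC⟩ := hbdd
  have hνg : ENNReal.ofReal (p j) • ν.map (fun x => r j * x + b j) ≤ ν :=
    (single_le_sum (f := fun k => ENNReal.ofReal (p k) • ν.map (fun x => r k * x + b k))
      (fun _ _ => Measure.zero_le _) (mem_univ j)).trans_eq hν.symm
  have hνμ : ν ≤ C • volume := by
    rw [hdens, ← withDensity_const]
    exact withDensity_mono hfC
  have hleft : Function.LeftInverse (fun x => (r j)⁻¹ * (x - b j)) (fun x => r j * x + b j) :=
    fun x => by field_simp [(hr j).ne']; ring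
  have := Measure.le_of_smul_map_le_of_map_le_smul (IsProbabilityMeasure.ne_zero ν)
    (by fun_prop) (by fun_prop) hleft hνg (Real.map_volume_inv_mul_sub (hr j) (b j)).le hC hνμ
  exact (ENNReal.ofReal_le_ofReal_iff (hr j).le).1 this

/-- If the invariant measure `ν` of the affine IFS `φ k x = r k * x + b k`
is absolutely continuous with respect to Lebesgue measure with an essentially bounded
density `f`, then `p j ≤ r j` for every `j`. -/
theorem stmt2 {N : ℕ} (hN : 1 ≤ N) (r b p : Fin (N + 1) → ℝ)
    (hr : ∀ k, 0 < r k) (hp : ∀ j, 0 < p j) (hp1 : ∑ j, p j = 1)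
    (hcontr : ∑ j, p j * Real.log (r j) < 0)
    (ν : Measure ℝ) [IsProbabilityMeasure ν]
    (hν : ν = ∑ j, ENNReal.ofReal (p j) • ν.map (fun x => r j * x + b j))
    (f : ℝ → ℝ≥0∞) (hf : Measurable f) (hdens : ν = volume.withDensity f)
    (hbdd : ∃ C : ℝ≥0∞, C ≠ ⊤ ∧ ∀ᵐ x ∂(volume : Measure ℝ), f x ≤ C) :
    ∀ j, p j ≤ r j :=
  stmt2_general r b p hr ν hν f hdens hbdd
end

section
/- Let N ≥ 1, 0 < λ < 1, relatively prime integers (n_k)_{0≤k≤N}, reals (b_k)_{0≤k≤N}, and p ∈ C_N with Σ_{j=0}^N p_j n_j > 0. Let ν be the invariant measure of the affine maps φ_k(x) = λ^{n_k} x + b_k. If ν is not Rajchman, then there exist α ∈ [1, 1/λ] and c > 0 such that |ν̂(α λ^{−k})| → c as k → +∞. -/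
/-!
Along every geometric sequence, `F = |ν̂|` is subharmonic for the random walk on `ℤ` with steps
`n j` and weights `p j`: `F (t λ^s) ≤ ∑ p j F (t λ^(s + n j))`. The walk has positive drift, so it
reaches every level `ℓ`, overshooting by less than `D = max n j`; since the steps are coprime it
lands exactly on `ℓ` with probability bounded below uniformly in `ℓ`. Hence if `F t` is close to
`c = limsup F`, so is `F (t λ^ℓ)` for all large `ℓ` with `t λ^ℓ` still large. Near-maximisers
`t = a λ^(-K)` with `a ∈ [1, 1/λ]` accumulate at some `α`, and continuity of `F` gives
`F (α λ^(-k)) → c`; finally `c > 0` because `ν` is not Rajchman.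
-/

open MeasureTheory Filter Finset

noncomputable section

/-- Fourier transform of a measure on `ℝ`: `μ̂(t) = ∫ e^{2iπtx} dμ(x)`. -/
def FT (μ : Measure ℝ) (t : ℝ) : ℂ :=
  ∫ x, Complex.exp (2 * (Real.pi : ℂ) * Complex.I * (t : ℂ) * (x : ℂ)) ∂μ

open Topology

lemma FT_eq_charFun (μ : Measure ℝ) (t : ℝ) : FT μ t = charFun μ (2 * Real.pi * t) := by
  simp only [FT, charFun_apply_real]
  congr with x
  push_cast
  ring_nf

lemma norm_FT_le_one (μ : Measure ℝ) [IsProbabilityMeasure μ] (t : ℝ) : ‖FT μ t‖ ≤ 1 := by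
  rw [FT_eq_charFun]
  exact norm_charFun_le_one _

lemma continuous_FT (μ : Measure ℝ) [IsFiniteMeasure μ] : Continuous (FT μ) := by
  simp_rw [funext (FT_eq_charFun μ)]
  fun_prop

lemma charFun_sum_ofReal_smul {ι : Type*} (s : Finset ι) (c : ι → ℝ) (hc : ∀ i, 0 ≤ c i)
    (μ : ι → Measure ℝ) [∀ i, IsFiniteMeasure (μ i)] (t : ℝ) :
    charFun (∑ i ∈ s, ENNReal.ofReal (c i) • μ i) t = ∑ i ∈ s, c i * charFun (μ i) t := by
  rw [charFun_apply, integral_finsetSum_measure]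
  · refine Finset.sum_congr rfl fun i _ => ?_
    rw [integral_smul_measure, ENNReal.toReal_ofReal (hc i), Complex.real_smul, charFun_apply]
  · intro i _
    exact ((BoundedContinuousFunction.innerProbChar t).integrable _ |>.smul_measure
      ENNReal.ofReal_ne_top)

lemma norm_charFun_map_mul_add (μ : Measure ℝ) (a b t : ℝ) :
    ‖charFun (μ.map fun x => a * x + b) t‖ = ‖charFun μ (a * t)‖ := by
  have : (fun x => a * x + b) = (· + b) ∘ (a * ·) := rfl
  rw [this, ← Measure.map_map (by fun_prop) (by fun_prop), charFun_map_add_const,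
    charFun_map_mul, norm_mul, Complex.norm_exp_ofReal_mul_I, mul_one]

lemma norm_FT_le_sum_of_selfSimilar {ι : Type*} [Fintype ι] (r b p : ι → ℝ) (hp : ∀ j, 0 ≤ p j)
    (ν : Measure ℝ) [IsFiniteMeasure ν]
    (hν : ν = ∑ j, ENNReal.ofReal (p j) • ν.map (fun x => r j * x + b j)) (t : ℝ) :
    ‖FT ν t‖ ≤ ∑ j, p j * ‖FT ν (r j * t)‖ := by
  calc ‖FT ν t‖ = ‖∑ j, (p j : ℂ) * charFun (ν.map fun x => r j * x + b j) (2 * Real.pi * t)‖ := by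
        rw [FT_eq_charFun]; conv_lhs => rw [hν]
        rw [charFun_sum_ofReal_smul _ _ hp]
    _ ≤ ∑ j, ‖(p j : ℂ) * charFun (ν.map fun x => r j * x + b j) (2 * Real.pi * t)‖ :=
        norm_sum_le _ _
    _ = ∑ j, p j * ‖FT ν (r j * t)‖ := by
        refine Finset.sum_congr rfl fun j _ => ?_
        rw [norm_mul, Complex.norm_of_nonneg (hp j), norm_charFun_map_mul_add, FT_eq_charFun]
        ring_nf

section StoppedWalk

variable {ι : Type*} [Fintype ι] (p : ι → ℝ) (n : ι → ℤ) (ℓ : ℤ)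

/-- `(stopStep p n ℓ ^ M) u s` is the expectation of `u` at time `M` for the random walk on `ℤ`
started at `s`, with step `n j` taken with probability `p j`, stopped on entering `[ℓ, ∞)`. -/
def stopStep : Module.End ℝ (ℤ → ℝ) where
  toFun u s := if ℓ ≤ s then u s else ∑ j, p j * u (s + n j)
  map_add' u v := by
    ext s
    by_cases hs : ℓ ≤ s <;> simp [hs, mul_add, sum_add_distrib]
  map_smul' c u := by
    ext s
    by_cases hs : ℓ ≤ s <;> simp [hs, mul_sum, mul_left_comm]

variable {p n ℓ}

lemma stopStep_apply_of_le {u : ℤ → ℝ} {s : ℤ} (hs : ℓ ≤ s) : stopStep p n ℓ u s = u s :=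
  if_pos hs

lemma stopStep_apply_of_lt {u : ℤ → ℝ} {s : ℤ} (hs : s < ℓ) :
    stopStep p n ℓ u s = ∑ j, p j * u (s + n j) :=
  if_neg hs.not_ge

lemma stopStep_pow_apply_of_le (M : ℕ) {u : ℤ → ℝ} {s : ℤ} (hs : ℓ ≤ s) :
    (stopStep p n ℓ ^ M) u s = u s := by
  induction M with
  | zero => rfl
  | succ M ih => rw [pow_succ', Module.End.mul_apply, stopStep_apply_of_le hs, ih]

lemma stopStep_pow_succ_apply_of_lt (M : ℕ) {u : ℤ → ℝ} {s : ℤ} (hs : s < ℓ) :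
    (stopStep p n ℓ ^ (M + 1)) u s = ∑ j, p j * (stopStep p n ℓ ^ M) u (s + n j) := by
  rw [pow_succ', Module.End.mul_apply, stopStep_apply_of_lt hs]

lemma stopStep_pow_const (hp1 : ∑ j, p j = 1) (M : ℕ) (C : ℝ) :
    (stopStep p n ℓ ^ M) (fun _ => C) = fun _ => C := by
  rw [Module.End.coe_pow]
  refine Function.iterate_fixed (funext fun s => ?_) M
  by_cases hs : ℓ ≤ s
  · exact stopStep_apply_of_le hs
  · rw [stopStep_apply_of_lt (not_le.mp hs), ← sum_mul, hp1, one_mul]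

lemma monotone_stopStep (hp : ∀ j, 0 ≤ p j) : Monotone (stopStep p n ℓ) := by
  intro u v huv s
  by_cases hs : ℓ ≤ s
  · simpa only [stopStep_apply_of_le hs] using huv s
  · simp only [stopStep_apply_of_lt (not_le.mp hs)]
    exact sum_le_sum fun j _ => mul_le_mul_of_nonneg_left (huv _) (hp j)

lemma monotone_stopStep_pow (hp : ∀ j, 0 ≤ p j) (M : ℕ) : Monotone (stopStep p n ℓ ^ M) := by
  rw [Module.End.coe_pow]
  exact (monotone_stopStep hp).iterate M

lemma stopStep_pow_nonneg (hp : ∀ j, 0 ≤ p j) (M : ℕ) {u : ℤ → ℝ} (hu : 0 ≤ u) :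
    0 ≤ (stopStep p n ℓ ^ M) u := by
  simpa using monotone_stopStep_pow hp M hu

lemma le_stopStep {u : ℤ → ℝ} (hu : ∀ s < ℓ, u s ≤ ∑ j, p j * u (s + n j)) :
    u ≤ stopStep p n ℓ u := by
  intro s
  by_cases hs : ℓ ≤ s
  · rw [stopStep_apply_of_le hs]
  · rw [stopStep_apply_of_lt (not_le.mp hs)]
    exact hu s (not_le.mp hs)

lemma monotone_stopStep_pow_apply (hp : ∀ j, 0 ≤ p j) {u : ℤ → ℝ} (hu : u ≤ stopStep p n ℓ u) :
    Monotone fun M => (stopStep p n ℓ ^ M) u := by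
  refine monotone_nat_of_le_succ fun M => ?_
  rw [pow_succ, Module.End.mul_apply]
  exact monotone_stopStep_pow hp M hu

/-- Since steps are at most `D`, the walk stopped at `ℓ` never visits `[ℓ + D, ∞)`. -/
lemma stopStep_pow_apply_le_of_forall_lt (hp : ∀ j, 0 ≤ p j) {D : ℤ} (hD : ∀ j, n j ≤ D)
    {u v : ℤ → ℝ} (huv : ∀ s < ℓ + D, u s ≤ v s) (M : ℕ) :
    ∀ s < ℓ + D, (stopStep p n ℓ ^ M) u s ≤ (stopStep p n ℓ ^ M) v s := by
  induction M with
  | zero => exact huv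
  | succ M ih =>
    intro s hs
    by_cases hsℓ : ℓ ≤ s
    · simpa only [stopStep_pow_apply_of_le _ hsℓ] using huv s hs
    · simp only [stopStep_pow_succ_apply_of_lt _ (not_le.mp hsℓ)]
      exact sum_le_sum fun j _ => mul_le_mul_of_nonneg_left (ih _ (by linarith [hD j])) (hp j)

lemma stopStep_pow_indicator_Iio_le (hp : ∀ j, 0 ≤ p j) {θ : ℝ} (hθ : 0 ≤ θ) (M : ℕ) (s : ℤ) :
    (stopStep p n ℓ ^ M) ((Set.Iio ℓ).indicator 1) s ≤
      Real.exp (θ * (ℓ - s)) * (∑ j, p j * Real.exp (-θ * n j)) ^ M := by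
  set Φ := ∑ j, p j * Real.exp (-θ * n j)
  induction M generalizing s with
  | zero =>
    by_cases hs : s < ℓ
    · have : (1 : ℝ) ≤ ℓ - s := by exact_mod_cast Int.sub_pos_of_lt hs
      simpa [Set.indicator_of_mem (Set.mem_Iio.mpr hs)] using
        Real.one_le_exp (mul_nonneg hθ (by linarith))
    · simp [Set.indicator_of_notMem (show s ∉ Set.Iio ℓ from hs), Real.exp_nonneg]
  | succ M ih =>
    by_cases hs : s < ℓ
    · rw [stopStep_pow_succ_apply_of_lt _ hs]
      calc ∑ j, p j * (stopStep p n ℓ ^ M) ((Set.Iio ℓ).indicator 1) (s + n j)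
          ≤ ∑ j, p j * (Real.exp (θ * (ℓ - (s + n j : ℤ))) * Φ ^ M) := by
            gcongr with j
            · exact hp j
            · exact ih _
        _ = ∑ j, Real.exp (θ * (ℓ - s)) * Φ ^ M * (p j * Real.exp (-θ * n j)) := by
            refine sum_congr rfl fun j _ => ?_
            rw [show θ * (ℓ - (s + n j : ℤ)) = θ * (ℓ - s) + -θ * n j by push_cast; ring,
              Real.exp_add]
            ring
        _ = Real.exp (θ * (ℓ - s)) * Φ ^ (M + 1) := by rw [← mul_sum, pow_succ, mul_assoc]
    · rw [stopStep_pow_apply_of_le _ (not_lt.mp hs),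
        Set.indicator_of_notMem (show s ∉ Set.Iio ℓ from hs)]
      exact mul_nonneg (Real.exp_nonneg _)
        (pow_nonneg (sum_nonneg fun j _ => mul_nonneg (hp j) (Real.exp_nonneg _)) _)

lemma exists_sum_mul_exp_lt_one (hp1 : ∑ j, p j = 1) (hdrift : 0 < ∑ j, p j * n j) :
    ∃ θ > 0, ∑ j, p j * Real.exp (-θ * n j) < 1 := by
  set f : ℝ → ℝ := fun θ => ∑ j, p j * Real.exp (-θ * n j)
  have hf : HasDerivAt f (-∑ j, p j * n j) 0 := by
    have := HasDerivAt.fun_sum (u := univ) fun j _ =>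
      (((hasDerivAt_id (0 : ℝ)).neg.mul_const (n j : ℝ)).exp).const_mul (p j)
    simpa [f, ← sum_neg_distrib] using this
  obtain ⟨θ, hθ, hθpos⟩ := ((hf.tendsto_slope_zero_right.eventually
    (gt_mem_nhds (neg_neg_of_pos hdrift))).and self_mem_nhdsWithin).exists
  have hf0 : f 0 = 1 := by simp [f, hp1]
  rw [zero_add, hf0, smul_eq_mul] at hθ
  refine ⟨θ, hθpos, ?_⟩
  by_contra h
  linarith [mul_nonneg (inv_nonneg.mpr (le_of_lt hθpos)) (sub_nonneg.mpr (not_lt.mp h))]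

lemma tendsto_stopStep_pow_indicator_Iio (hp : ∀ j, 0 ≤ p j) (hp1 : ∑ j, p j = 1)
    (hdrift : 0 < ∑ j, p j * n j) (ℓ s : ℤ) :
    Tendsto (fun M => (stopStep p n ℓ ^ M) ((Set.Iio ℓ).indicator 1) s) atTop (𝓝 0) := by
  obtain ⟨θ, hθ, hΦ⟩ := exists_sum_mul_exp_lt_one hp1 hdrift
  have hΦ0 : 0 ≤ ∑ j, p j * Real.exp (-θ * n j) :=
    sum_nonneg fun j _ => mul_nonneg (hp j) (Real.exp_nonneg _)
  refine squeeze_zero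
    (fun M => stopStep_pow_nonneg hp M (Set.indicator_nonneg (fun _ _ => zero_le_one)) s)
    (fun M => stopStep_pow_indicator_Iio_le hp hθ.le M s) ?_
  simpa using (tendsto_pow_atTop_nhds_zero_of_lt_one hΦ0 hΦ).const_mul (Real.exp (θ * (ℓ - s)))

/-- Strong Markov property at the first entrance into `[ℓ', ∞)`, for an `ℓ`-subharmonic `w`. -/
lemma stopStep_pow_stopStep_pow_le (hp : ∀ j, 0 ≤ p j) {ℓ' : ℤ} (hℓ : ℓ' ≤ ℓ) {w : ℤ → ℝ}
    (hw : w ≤ stopStep p n ℓ w) (R M : ℕ) :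
    (stopStep p n ℓ' ^ M) ((stopStep p n ℓ ^ R) w) ≤ (stopStep p n ℓ ^ (M + R)) w := by
  induction M with
  | zero => simp
  | succ M ih =>
    intro s
    by_cases hs : ℓ' ≤ s
    · rw [stopStep_pow_apply_of_le _ hs]
      exact monotone_stopStep_pow_apply hp hw (by omega) s
    · rw [stopStep_pow_succ_apply_of_lt _ (not_le.mp hs), Nat.succ_add,
        stopStep_pow_succ_apply_of_lt _ (by omega)]
      exact sum_le_sum fun j _ => mul_le_mul_of_nonneg_left (ih _) (hp j)

/-- Following the steps of `l` in increasing order, the walk from `s` stays below `ℓ`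
until it lands on `ℓ`. -/
lemma pow_length_le_stopStep_pow_single {pmin : ℝ} (hpmin : 0 ≤ pmin) (hpmin1 : pmin ≤ 1)
    (hp : ∀ j, pmin ≤ p j) {l : List ℤ} (hl : l.Pairwise (· ≤ ·)) (hln : ∀ a ∈ l, a ∈ Set.range n)
    {s : ℤ} (hs : s ≤ ℓ) (hsum : s + l.sum = ℓ) {M : ℕ} (hM : l.length ≤ M) :
    pmin ^ l.length ≤ (stopStep p n ℓ ^ M) (Pi.single ℓ 1) s := by
  have hp0 : ∀ j, 0 ≤ p j := fun j => hpmin.trans (hp j)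
  induction l generalizing s M with
  | nil => simp_all [stopStep_pow_apply_of_le]
  | cons a l ih =>
    rcases hs.eq_or_lt with rfl | hs
    · simpa [stopStep_pow_apply_of_le] using pow_le_one₀ hpmin hpmin1
    obtain ⟨M, rfl⟩ : ∃ M', M = M' + 1 := ⟨M - 1, by simp at hM; omega⟩
    obtain ⟨j, rfl⟩ := hln a (by simp)
    rw [List.pairwise_cons] at hl
    have hnext : s + n j ≤ ℓ := by
      rcases le_or_gt (n j) 0 with hj | hj
      · omega
      · have : 0 ≤ l.sum := List.sum_nonneg fun b hb => hj.le.trans (hl.1 b hb)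
        simp only [List.sum_cons] at hsum
        omega
    rw [stopStep_pow_succ_apply_of_lt _ hs, List.length_cons, pow_succ']
    calc pmin * pmin ^ l.length
        ≤ p j * (stopStep p n ℓ ^ M) (Pi.single ℓ 1) (s + n j) := by
          gcongr
          · exact hp0 j
          · exact hp j
          · exact ih hl.2 (fun b hb => hln b (by simp [hb])) hnext
              (by simp only [List.sum_cons] at hsum; omega) (by simp at hM; omega)
      _ ≤ _ := single_le_sum
          (f := fun i => p i * (stopStep p n ℓ ^ M) (Pi.single ℓ 1) (s + n i))
          (fun i _ => mul_nonneg (hp0 i)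
            (stopStep_pow_nonneg hp0 M (Pi.single_nonneg.mpr zero_le_one) _)) (mem_univ j)

end StoppedWalk

lemma mem_of_mul_self_le {S : AddSubmonoid ℤ} {q : ℤ} (hq : 0 < q) (hqS : q ∈ S)
    (hq1S : q + 1 ∈ S) {z : ℤ} (hz : q * q ≤ z) : z ∈ S := by
  have hqz : q ≤ z / q := Int.le_ediv_of_mul_le hq hz
  obtain ⟨a, ha⟩ : ∃ a : ℕ, (a : ℤ) = z / q - z % q :=
    ⟨_, Int.toNat_of_nonneg (by linarith [Int.emod_lt_of_pos z hq])⟩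
  obtain ⟨b, hb⟩ : ∃ b : ℕ, (b : ℤ) = z % q := ⟨_, Int.toNat_of_nonneg (Int.emod_nonneg _ hq.ne')⟩
  have hzab : z = a • q + b • (q + 1) := by
    simp only [nsmul_eq_mul, ha, hb]
    linarith [Int.mul_ediv_add_emod z q]
  rw [hzab]
  exact add_mem (nsmul_mem hqS a) (nsmul_mem hq1S b)

lemma exists_forall_ge_mem_closure_range {ι : Type*} [Fintype ι] (n : ι → ℤ)
    (hgcd : univ.gcd n = 1) {j₀ : ι} (hj₀ : 0 < n j₀) :
    ∃ Z, ∀ z ≥ Z, z ∈ AddSubmonoid.closure (Set.range n) := by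
  set S := AddSubmonoid.closure (Set.range n)
  have hnS : ∀ j, n j ∈ S := fun j => AddSubmonoid.subset_closure (Set.mem_range_self j)
  obtain ⟨c, hc⟩ := univ.gcd_eq_sum_mul n
  rw [hgcd] at hc
  set P := ∑ j, (c j).toNat • n j
  set Q := ∑ j, (-c j).toNat • n j
  have hPQ : P = Q + 1 := by
    have : P - Q = ∑ j, n j * c j := by
      simp only [P, Q, ← sum_sub_distrib, nsmul_eq_mul, ← sub_mul, Int.toNat_sub_toNat_neg]
      exact sum_congr rfl fun j _ => mul_comm _ _
    omega
  set k := Q.natAbs + 1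
  have hk : (k : ℤ) ≤ k • n j₀ := by
    rw [nsmul_eq_mul]; exact le_mul_of_one_le_right (by positivity) hj₀
  refine ⟨(Q + k • n j₀) * (Q + k • n j₀), fun z hz => mem_of_mul_self_le ?_ ?_ ?_ hz⟩
  · have : (k : ℤ) = |Q| + 1 := by simp [k]
    linarith [neg_abs_le Q]
  · exact add_mem (sum_mem fun j _ => nsmul_mem (hnS j) _) (nsmul_mem (hnS j₀) k)
  · rw [add_right_comm, ← hPQ]
    exact add_mem (sum_mem fun j _ => nsmul_mem (hnS j) _) (nsmul_mem (hnS j₀) k)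

lemma exists_sorted_list_sum_eq {ι : Type*} {n : ι → ℤ} {z : ℤ}
    (hz : z ∈ AddSubmonoid.closure (Set.range n)) :
    ∃ l : List ℤ, l.Pairwise (· ≤ ·) ∧ (∀ a ∈ l, a ∈ Set.range n) ∧ l.sum = z := by
  obtain ⟨l, hln, rfl⟩ := AddSubmonoid.exists_list_of_mem_closure hz
  exact ⟨l.insertionSort (· ≤ ·), List.pairwise_insertionSort _ _,
    fun a ha => hln a (List.mem_insertionSort _ |>.mp ha), (List.perm_insertionSort _ _).sum_eq⟩

section Hitting

variable {ι : Type*} [Fintype ι] {p : ι → ℝ} {n : ι → ℤ}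

lemma exists_forall_band_le_stopStep_pow_single (hp : ∀ j, 0 < p j) (hgcd : univ.gcd n = 1)
    {j₀ : ι} (hj₀ : 0 < n j₀) (D : ℤ) :
    ∃ (Z : ℤ) (R : ℕ), 0 ≤ Z ∧ ∃ δ > 0, ∀ ℓ s, ℓ - Z - D ≤ s → s < ℓ - Z →
      δ ≤ (stopStep p n ℓ ^ R) (Pi.single ℓ 1) s := by
  obtain ⟨Z₀, hZ₀⟩ := exists_forall_ge_mem_closure_range n hgcd hj₀
  set Z := max Z₀ 0
  have hrep : ∀ z ∈ Icc Z (Z + D), ∃ l : List ℤ,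
      l.Pairwise (· ≤ ·) ∧ (∀ a ∈ l, a ∈ Set.range n) ∧ l.sum = z :=
    fun z hz => exists_sorted_list_sum_eq (hZ₀ z ((le_max_left _ _).trans (mem_Icc.mp hz).1))
  choose! L hL using hrep
  have : Nonempty ι := ⟨j₀⟩
  obtain ⟨jm, hjm⟩ := Finite.exists_min p
  set pmin := min (p jm) 1
  have hpmin : 0 < pmin := lt_min (hp jm) one_pos
  set R := (Icc Z (Z + D)).sup fun z => (L z).length
  refine ⟨Z, R, le_max_right _ _, pmin ^ R, pow_pos hpmin R, fun ℓ s hs₁ hs₂ => ?_⟩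
  have hz : ℓ - s ∈ Icc Z (Z + D) := mem_Icc.mpr ⟨by omega, by omega⟩
  obtain ⟨hsorted, hrange, hsum⟩ := hL _ hz
  have hlen : (L (ℓ - s)).length ≤ R := le_sup (f := fun z => (L z).length) hz
  calc pmin ^ R ≤ pmin ^ (L (ℓ - s)).length := pow_le_pow_of_le_one hpmin.le (min_le_right _ _) hlen
    _ ≤ _ := pow_length_le_stopStep_pow_single hpmin.le (min_le_right _ _)
        (fun j => (min_le_left _ _).trans (hjm j)) hsorted hrange
        (by have := le_max_right Z₀ 0; omega) (by omega) hlen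

/-- The walk first enters `[ℓ - Z - D, ∞)`, landing in the band `[ℓ - Z - D, ℓ - Z)`; from the
band it hits `ℓ` within `R` further steps with probability at least `δ`. -/
lemma exists_mul_one_sub_le_stopStep_pow_single (hp : ∀ j, 0 < p j) (hp1 : ∑ j, p j = 1)
    (hgcd : univ.gcd n = 1) {j₀ : ι} (hj₀ : 0 < n j₀) {D : ℤ} (hD : ∀ j, n j ≤ D) :
    ∃ (Z : ℤ) (R : ℕ), 0 ≤ Z ∧ ∃ δ > 0, ∀ ℓ s, s < ℓ - Z → ∀ M : ℕ,
      δ * (1 - (stopStep p n (ℓ - Z - D) ^ M) ((Set.Iio (ℓ - Z - D)).indicator 1) s) ≤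
        (stopStep p n ℓ ^ (M + R)) (Pi.single ℓ 1) s := by
  have hp0 : ∀ j, 0 ≤ p j := fun j => (hp j).le
  have hsingle0 : ∀ ℓ : ℤ, (0 : ℤ → ℝ) ≤ Pi.single ℓ 1 := fun ℓ => Pi.single_nonneg.mpr zero_le_one
  have hD0 : 0 ≤ D := (hj₀.trans_le (hD j₀)).le
  obtain ⟨Z, R, hZ, δ, hδ, hband⟩ := exists_forall_band_le_stopStep_pow_single hp hgcd hj₀ D
  refine ⟨Z, R, hZ, δ, hδ, fun ℓ s hs M => ?_⟩
  set ℓ' := ℓ - Z - D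
  set B := Set.Ico ℓ' (ℓ' + D)
  have hδB : δ • B.indicator 1 ≤ (stopStep p n ℓ ^ R) (Pi.single ℓ 1) := by
    intro t
    by_cases ht : t ∈ B
    · simpa [Set.indicator_of_mem ht] using hband ℓ t ht.1 (by linarith [ht.2])
    · simpa [Set.indicator_of_notMem ht] using
        stopStep_pow_nonneg hp0 R (hsingle0 ℓ) t
  have hcover : ∀ t < ℓ' + D,
      (fun _ => (1 : ℝ)) t ≤ (B.indicator 1 + (Set.Iio ℓ').indicator 1 : ℤ → ℝ) t := by
    intro t ht
    by_cases htℓ' : t < ℓ'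
    · simp [B, htℓ']
    · simp [Set.indicator_of_mem (show t ∈ B from ⟨not_lt.mp htℓ', ht⟩), not_lt.mp htℓ']
  have h1 : 1 ≤ (stopStep p n ℓ' ^ M) (B.indicator 1) s +
      (stopStep p n ℓ' ^ M) ((Set.Iio ℓ').indicator 1) s := by
    simpa [stopStep_pow_const hp1] using
      stopStep_pow_apply_le_of_forall_lt hp0 hD hcover M s (by omega)
  have hsingle : Pi.single ℓ 1 ≤ stopStep p n ℓ (Pi.single ℓ 1) :=
    le_stopStep fun t ht => by
      simpa [ht.ne] using sum_nonneg fun j _ => mul_nonneg (hp0 j)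
        (hsingle0 ℓ (t + n j))
  calc δ * (1 - (stopStep p n ℓ' ^ M) ((Set.Iio ℓ').indicator 1) s)
      ≤ (stopStep p n ℓ' ^ M) (δ • B.indicator 1) s := by
        rw [map_smul, Pi.smul_apply, smul_eq_mul]
        exact mul_le_mul_of_nonneg_left (by linarith) hδ.le
    _ ≤ (stopStep p n ℓ' ^ M) ((stopStep p n ℓ ^ R) (Pi.single ℓ 1)) s :=
        monotone_stopStep_pow hp0 M hδB s
    _ ≤ _ := stopStep_pow_stopStep_pow_le hp0 (by omega) hsingle R M s

/-- Compare `u` with `1` before `ℓ`, with `u ℓ` at `ℓ` and with `X` on the rest of the window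
`[ℓ, ℓ + D)`, which is all the stopped walk can reach. -/
lemma sub_mul_stopStep_pow_single_le (hp : ∀ j, 0 ≤ p j) (hp1 : ∑ j, p j = 1) {D : ℤ}
    (hD : ∀ j, n j ≤ D) {u : ℤ → ℝ} (hu1 : ∀ s, u s ≤ 1)
    (hsub : ∀ s, u s ≤ ∑ j, p j * u (s + n j)) {ℓ : ℤ} {X : ℝ}
    (hX : ∀ s, ℓ ≤ s → s < ℓ + D → u s ≤ X) (hX0 : 0 ≤ X) {s : ℤ} (hs : s < ℓ + D) (M : ℕ) :
    (X - u ℓ) * (stopStep p n ℓ ^ M) (Pi.single ℓ 1) s ≤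
      X - u s + (stopStep p n ℓ ^ M) ((Set.Iio ℓ).indicator 1) s := by
  set v : ℤ → ℝ := (fun _ => X) + (1 - X) • (Set.Iio ℓ).indicator 1 + (u ℓ - X) • Pi.single ℓ 1
  have huv : ∀ t < ℓ + D, u t ≤ v t := by
    intro t ht
    rcases lt_trichotomy t ℓ with htℓ | rfl | htℓ
    · simp [v, htℓ, htℓ.ne, hu1]
    · simp [v]
    · simp [v, htℓ.ne', not_lt.mpr htℓ.le, hX t htℓ.le ht]
  have hA : 0 ≤ (stopStep p n ℓ ^ M) ((Set.Iio ℓ).indicator 1) s :=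
    stopStep_pow_nonneg hp M (Set.indicator_nonneg (fun _ _ => zero_le_one)) s
  have hTu : u s ≤ (stopStep p n ℓ ^ M) u s :=
    monotone_stopStep_pow_apply hp (le_stopStep fun t _ => hsub t) (Nat.zero_le M) s
  have hTv := stopStep_pow_apply_le_of_forall_lt hp hD huv M s hs
  simp only [v, map_add, map_smul, stopStep_pow_const hp1, Pi.add_apply, Pi.smul_apply,
    smul_eq_mul] at hTv
  nlinarith [mul_nonneg hX0 hA]

/-- The walk from `0` stopped at `ℓ` ends in `[ℓ, ℓ + D)`, and exactly at `ℓ` with probability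
at least `δ` uniformly in `ℓ ≥ L₀`: this is where `gcd = 1` and the positive drift enter. -/
theorem exists_mul_sub_le_sub_of_subharmonic (hp : ∀ j, 0 < p j) (hp1 : ∑ j, p j = 1)
    (hgcd : univ.gcd n = 1) (hdrift : 0 < ∑ j, p j * n j) {D : ℤ} (hD : ∀ j, n j ≤ D) :
    ∃ δ > 0, ∃ L₀ : ℤ, ∀ u : ℤ → ℝ, (∀ s, 0 ≤ u s) → (∀ s, u s ≤ 1) →
      (∀ s, u s ≤ ∑ j, p j * u (s + n j)) →
      ∀ ℓ ≥ L₀, ∀ X, (∀ s, ℓ ≤ s → s < ℓ + D → u s ≤ X) → δ * (X - u ℓ) ≤ X - u 0 := by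
  have hp0 : ∀ j, 0 ≤ p j := fun j => (hp j).le
  obtain ⟨j₀, hj₀⟩ : ∃ j, 0 < n j := by
    by_contra! h
    exact hdrift.not_ge (sum_nonpos fun j _ => mul_nonpos_of_nonneg_of_nonpos (hp0 j)
      (Int.cast_nonpos.mpr (h j)))
  have hD1 : 1 ≤ D := hj₀.trans_le (hD j₀)
  obtain ⟨Z, R, hZ, δ, hδ, hhit⟩ := exists_mul_one_sub_le_stopStep_pow_single hp hp1 hgcd hj₀ hD
  refine ⟨δ, hδ, Z + 1, fun u hu0 hu1 hsub ℓ hℓ X hX => ?_⟩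
  have huℓX : u ℓ ≤ X := hX ℓ le_rfl (by omega)
  have hineq : ∀ M, δ * (1 - (stopStep p n (ℓ - Z - D) ^ M) ((Set.Iio (ℓ - Z - D)).indicator 1) 0)
      * (X - u ℓ) ≤ X - u 0 + (stopStep p n ℓ ^ (M + R)) ((Set.Iio ℓ).indicator 1) 0 := by
    intro M
    rw [mul_comm _ (X - u ℓ)]
    exact (mul_le_mul_of_nonneg_left (hhit ℓ 0 (by omega) M) (sub_nonneg.mpr huℓX)).trans
      (sub_mul_stopStep_pow_single_le hp0 hp1 hD hu1 hsub hX ((hu0 ℓ).trans huℓX) (by omega) _)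
  refine le_of_tendsto_of_tendsto' (b := atTop) ?_ ?_ hineq
  · simpa using ((tendsto_stopStep_pow_indicator_Iio hp0 hp1 hdrift _ 0).const_sub 1
      |>.const_mul δ).mul_const (X - u ℓ)
  · simpa using ((tendsto_stopStep_pow_indicator_Iio hp0 hp1 hdrift ℓ 0).comp
      (tendsto_add_atTop_nat R)).const_add (X - u 0)

end Hitting

lemma exists_mem_Icc_mul_pow_eq {y t : ℝ} (hy : 1 < y) {m : ℕ} (ht : y ^ m ≤ t) :
    ∃ a ∈ Set.Icc 1 y, ∃ K ≥ m, t = a * y ^ K := by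
  obtain ⟨K, hK1, hK2⟩ := exists_nat_pow_near ((one_le_pow₀ hy.le).trans ht) hy
  have hyK : 0 < y ^ K := by positivity
  refine ⟨t / y ^ K, ⟨(one_le_div hyK).mpr hK1, (div_le_iff₀ hyK).mpr ?_⟩, K, ?_, by field_simp⟩
  · rw [← pow_succ']; exact hK2.le
  · by_contra! hKm
    exact (ht.trans_lt hK2).not_ge (pow_le_pow_right₀ hy.le hKm)

lemma inv_pow_mul_zpow (lam : ℝ) (hlam : lam ≠ 0) (K : ℕ) (s : ℤ) :
    lam⁻¹ ^ K * lam ^ s = lam ^ (s - K) := by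
  rw [zpow_sub₀ hlam, zpow_natCast, inv_pow, div_eq_inv_mul]

/-- Take near-maximisers `a m λ^(-K m)` of `F` with `a m → α`. For large `k`, `F ≤ c + η` on the
window above `λ^(-k)`, so the scale inequality at `t = a m λ^(-K m)`, `ℓ = K m - k` bounds
`F (a m λ^(-k))` below by `c + η - (η + 1/(m+1))/δ`; let `m → ∞`, then `η → 0`. -/
theorem exists_tendsto_of_scale_inequality {F : ℝ → ℝ} (hF : Continuous F) {lam : ℝ}
    (hlam0 : 0 < lam) (hlam1 : lam < 1) {D : ℤ} {δ : ℝ} (hδ : 0 < δ) {L₀ : ℤ}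
    (hscale : ∀ t : ℝ, ∀ ℓ ≥ L₀, ∀ X, (∀ s, ℓ ≤ s → s < ℓ + D → F (t * lam ^ s) ≤ X) →
      δ * (X - F (t * lam ^ ℓ)) ≤ X - F t)
    {c : ℝ} (hc_le : ∀ η > 0, ∀ᶠ t in atTop, F t ≤ c + η)
    (hc_freq : ∀ η > 0, ∃ᶠ t in atTop, c - η ≤ F t) :
    ∃ α, 1 ≤ α ∧ α ≤ lam⁻¹ ∧ Tendsto (fun k : ℕ => F (α * lam⁻¹ ^ k)) atTop (𝓝 c) := by
  have hy : 1 < lam⁻¹ := (one_lt_inv₀ hlam0).mpr hlam1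
  have hnear : ∀ m : ℕ, ∃ a ∈ Set.Icc 1 lam⁻¹, ∃ K ≥ m, c - 1 / (m + 1) ≤ F (a * lam⁻¹ ^ K) := by
    intro m
    obtain ⟨t, ht, hFt⟩ := (hc_freq _ Nat.one_div_pos_of_nat).forall_exists_of_atTop (lam⁻¹ ^ m)
    obtain ⟨a, ha, K, hK, rfl⟩ := exists_mem_Icc_mul_pow_eq hy ht
    exact ⟨a, ha, K, hK, hFt⟩
  choose a ha K hK hFa using hnear
  obtain ⟨α, hα, φ, hφ, hαφ⟩ := isCompact_Icc.tendsto_subseq ha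
  refine ⟨α, hα.1, hα.2, ?_⟩
  have hkey : ∀ η > 0, ∀ᶠ k : ℕ in atTop, δ * (c + η - F (α * lam⁻¹ ^ k)) ≤ η := by
    intro η hη
    obtain ⟨T, hT⟩ := eventually_atTop.mp (hc_le η hη)
    obtain ⟨n₀, hn₀⟩ := pow_unbounded_of_one_lt T hy
    filter_upwards [eventually_ge_atTop (n₀ + D).toNat] with k hk
    have hstep : ∀ m, L₀ + k ≤ K m → δ * (c + η - F (a m * lam⁻¹ ^ k)) ≤ η + 1 / (m + 1) := by
      intro m hm
      have := hscale (a m * lam⁻¹ ^ K m) (K m - k) (by omega) (c + η) fun s hs₁ hs₂ => hT _ ?_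
      · rw [mul_assoc, inv_pow_mul_zpow lam hlam0.ne', sub_sub_cancel_left, ← inv_zpow',
          zpow_natCast] at this
        linarith [hFa m]
      rw [mul_assoc, inv_pow_mul_zpow lam hlam0.ne']
      calc T ≤ lam⁻¹ ^ n₀ := hn₀.le
        _ = lam ^ (-(n₀ : ℤ)) := by rw [zpow_neg, zpow_natCast, inv_pow]
        _ ≤ lam ^ (s - K m) := zpow_le_zpow_right_of_le_one₀ hlam0 hlam1.le (by omega)
        _ ≤ a m * lam ^ (s - K m) := le_mul_of_one_le_left (by positivity) (ha m).1
    refine le_of_tendsto_of_tendsto (b := atTop)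
      (f := fun m => δ * (c + η - F (a (φ m) * lam⁻¹ ^ k))) (g := fun m => η + 1 / (φ m + 1))
      ?_ ?_ ?_
    · exact (((hF.comp (continuous_mul_const _)).tendsto α).comp hαφ).const_sub _ |>.const_mul δ
    · simpa using (tendsto_one_div_add_atTop_nhds_zero_nat.comp hφ.tendsto_atTop).const_add η
    · filter_upwards [eventually_ge_atTop (L₀ + k).toNat] with m hm
      exact hstep (φ m) (by have := hφ.le_apply (x := m); have := hK (φ m); omega)
  refine tendsto_order.mpr ⟨fun b hb => ?_, fun b hb => ?_⟩
  · have hη : 0 < δ * (c - b) / 2 := by have := mul_pos hδ (sub_pos.mpr hb); linarith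
    filter_upwards [hkey _ hη] with k hk
    have hδη : 0 ≤ δ * (δ * (c - b) / 2) := by positivity
    have : δ * (c - F (α * lam⁻¹ ^ k)) ≤ δ * ((c - b) / 2) := by linarith
    linarith [le_of_mul_le_mul_left this hδ]
  · have hαk : Tendsto (fun k : ℕ => α * lam⁻¹ ^ k) atTop atTop :=
      (tendsto_pow_atTop_atTop_of_one_lt hy).const_mul_atTop (by linarith [hα.1])
    filter_upwards [hαk.eventually (hc_le ((b - c) / 2) (by linarith))] with k hk
    linarith

theorem exists_scale_inequality_norm_FT {ι : Type*} [Fintype ι] {lam : ℝ} (hlam0 : 0 < lam)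
    {n : ι → ℤ} (hgcd : univ.gcd n = 1) {b p : ι → ℝ} (hp : ∀ j, 0 < p j) (hp1 : ∑ j, p j = 1)
    (hdrift : 0 < ∑ j, p j * (n j : ℝ)) {ν : Measure ℝ} [IsProbabilityMeasure ν]
    (hν : ν = ∑ j, ENNReal.ofReal (p j) • ν.map (fun x => lam ^ (n j) * x + b j)) :
    ∃ D : ℤ, ∃ δ > 0, ∃ L₀ : ℤ, ∀ t : ℝ, ∀ ℓ ≥ L₀, ∀ X,
      (∀ s, ℓ ≤ s → s < ℓ + D → ‖FT ν (t * lam ^ s)‖ ≤ X) →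
        δ * (X - ‖FT ν (t * lam ^ ℓ)‖) ≤ X - ‖FT ν t‖ := by
  obtain ⟨D, hD⟩ := Finite.exists_le n
  obtain ⟨δ, hδ, L₀, h⟩ := exists_mul_sub_le_sub_of_subharmonic hp hp1 hgcd hdrift hD
  refine ⟨D, δ, hδ, L₀, fun t ℓ hℓ X hX => ?_⟩
  have hsub : ∀ s : ℤ, ‖FT ν (t * lam ^ s)‖ ≤ ∑ j, p j * ‖FT ν (t * lam ^ (s + n j))‖ := by
    intro s
    calc ‖FT ν (t * lam ^ s)‖ ≤ ∑ j, p j * ‖FT ν (lam ^ n j * (t * lam ^ s))‖ :=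
          norm_FT_le_sum_of_selfSimilar _ b p (fun j => (hp j).le) ν hν _
      _ = ∑ j, p j * ‖FT ν (t * lam ^ (s + n j))‖ := by
          simp_rw [zpow_add₀ hlam0.ne', mul_comm (lam ^ s), ← mul_assoc, mul_comm t]
  simpa using h (fun s => ‖FT ν (t * lam ^ s)‖) (fun _ => norm_nonneg _)
    (fun _ => norm_FT_le_one ν _) hsub ℓ hℓ X hX

theorem stmt6_general {N : ℕ} (lam : ℝ) (hlam0 : 0 < lam) (hlam1 : lam < 1)
    (n : Fin (N + 1) → ℤ) (hgcd : Finset.univ.gcd n = 1)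
    (b p : Fin (N + 1) → ℝ)
    (hp : ∀ j, 0 < p j) (hp1 : ∑ j, p j = 1)
    (hdrift : 0 < ∑ j, p j * (n j : ℝ))
    (ν : Measure ℝ) [IsProbabilityMeasure ν]
    (hν : ν = ∑ j, ENNReal.ofReal (p j) • ν.map (fun x => lam ^ (n j) * x + b j))
    (hnotR : ¬ Tendsto (FT ν) atTop (nhds 0)) :
    ∃ α : ℝ, 1 ≤ α ∧ α ≤ lam⁻¹ ∧ ∃ c : ℝ, 0 < c ∧
      Tendsto (fun k : ℕ => ‖FT ν (α * lam⁻¹ ^ k)‖) atTop (nhds c) := by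
  obtain ⟨D, δ, hδ, L₀, hscale⟩ := exists_scale_inequality_norm_FT hlam0 hgcd hp hp1 hdrift hν
  set F : ℝ → ℝ := fun t => ‖FT ν t‖
  have hbdd : IsBoundedUnder (· ≤ ·) atTop F := isBoundedUnder_of ⟨1, norm_FT_le_one ν⟩
  have hcobdd : IsCoboundedUnder (· ≤ ·) atTop F :=
    isCoboundedUnder_le_of_le atTop fun t => norm_nonneg (FT ν t)
  set c := limsup F atTop
  have hc_lt : ∀ y > c, ∀ᶠ t in atTop, F t < y := fun y hy => eventually_lt_of_limsup_lt hy hbdd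
  have hc_pos : 0 < c := by
    by_contra! hc
    refine hnotR (tendsto_zero_iff_norm_tendsto_zero.mpr (tendsto_order.mpr ⟨?_, ?_⟩))
    · exact fun y hy => Eventually.of_forall fun t => hy.trans_le (norm_nonneg _)
    · exact fun y hy => hc_lt y (hc.trans_lt hy)
  obtain ⟨α, hα1, hα2, hα⟩ := exists_tendsto_of_scale_inequality (continuous_FT ν).norm hlam0
    hlam1 hδ hscale (fun η hη => (hc_lt _ (by linarith)).mono fun _ => le_of_lt)
    (fun η hη => (frequently_lt_of_lt_limsup hcobdd (by linarith)).mono fun _ => le_of_lt)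
  exact ⟨α, hα1, hα2, c, hc_pos, hα⟩

/-- Let `0 < λ < 1`, relatively prime integers `(n k)`, reals `(b k)`
and `p ∈ C_N` with `∑ p j * n j > 0`, and let `ν` be the invariant measure of the maps
`φ k x = λ ^ (n k) * x + b k`. If `ν` is not Rajchman, then there exist
`α ∈ [1, 1/λ]` and `c > 0` with `|ν̂(α λ^{-k})| → c` as `k → ∞`. -/
theorem stmt6 {N : ℕ} (hN : 1 ≤ N) (lam : ℝ) (hlam0 : 0 < lam) (hlam1 : lam < 1)
    (n : Fin (N + 1) → ℤ) (hgcd : Finset.univ.gcd n = 1)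
    (b p : Fin (N + 1) → ℝ)
    (hp : ∀ j, 0 < p j) (hp1 : ∑ j, p j = 1)
    (hdrift : 0 < ∑ j, p j * (n j : ℝ))
    (ν : Measure ℝ) [IsProbabilityMeasure ν]
    (hν : ν = ∑ j, ENNReal.ofReal (p j) • ν.map (fun x => lam ^ (n j) * x + b j))
    (hnotR : ¬ Tendsto (FT ν) atTop (nhds 0)) :
    ∃ α : ℝ, 1 ≤ α ∧ α ≤ lam⁻¹ ∧ ∃ c : ℝ, 0 < c ∧
      Tendsto (fun k : ℕ => ‖FT ν (α * lam⁻¹ ^ k)‖) atTop (nhds c) :=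
  stmt6_general lam hlam0 hlam1 n hgcd b p hp hp1 hdrift ν hν hnotR
end
end

section
/- Let 1/λ > 1 be a Pisot number, N ≥ 1, relatively prime integers (n_k)_{0≤k≤N}, and μ_k ∈ T(1/λ) for 0 ≤ k ≤ N. Let p ∈ C_N with Σ_{j=0}^N p_j n_j > 0 and let (ε_l)_{l∈ℤ} be two-sided i.i.d. random variables with law p, with associated cocycle (S_l)_{l∈ℤ}. Then for every k ∈ ℤ, almost surely the symmetric partial sums Σ_{−L≤l≤L} μ_{ε_l} λ^{k+S_l} mod 1 converge, as L → ∞, in the torus 𝕋 = ℝ/ℤ; i.e. the 𝕋-valued random variable Z_k = Σ_{l∈ℤ} μ_{ε_l} λ^{k+S_l} mod 1 is well defined. -/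
/-!
By the strong law of large numbers the cocycle grows linearly in both directions: almost surely
`S_l / l → ∑ p_j n_j > 0` as `l → ±∞`. For `l → +∞` the terms `μ λ^(k + S_l)` are then
geometrically small reals. For `l → -∞` they are `μ θ^m` with `θ = λ⁻¹` and `m → ∞` linearly;
for `μ ∈ T(θ)` the integer `Tr(θ^m μ)` differs from `μ θ^m` by the sum of the other conjugates
`σ(θ)^m σ(μ)`, which decays geometrically because `θ` is Pisot. So the series of norms in
`ℝ/ℤ` converges, and the symmetric partial sums converge in the complete group `ℝ/ℤ`.
-/

open MeasureTheory ProbabilityTheory Filter Finset IntermediateField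

noncomputable section

def IsPisot (θ : ℝ) : Prop :=
  1 < θ ∧ IsIntegral ℤ θ ∧
    ∀ z : ℂ, (Polynomial.aeval z) (minpoly ℚ θ) = 0 → z ≠ (θ : ℂ) → ‖z‖ < 1

/-- The set `T(θ) = {α ∈ ℚ(θ) : Tr_θ(θ^n α) ∈ ℤ for all large n}`. -/
def traceSet (θ : ℝ) : Set ℝ :=
  {α | ∃ hα : α ∈ ℚ⟮θ⟯, ∃ N : ℕ, ∀ n ≥ N, ∃ z : ℤ,
    Algebra.trace ℚ ℚ⟮θ⟯
      ((⟨θ, IntermediateField.mem_adjoin_simple_self ℚ θ⟩ : ℚ⟮θ⟯) ^ n * ⟨α, hα⟩) = (z : ℚ)}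

/-- The cocycle `S_l` associated to the sequence `(n (ε i))_{i ∈ ℤ}`:
`S_0 = 0`, `S_l = n (ε 0) + ⋯ + n (ε (l-1))` for `l ≥ 1`, and
`S_{-l} = - n (ε (-l)) - ⋯ - n (ε (-1))` for `l ≥ 1`. -/
def cocy {N : ℕ} {Ω : Type*} (n : Fin (N + 1) → ℤ) (ε : ℤ → Ω → Fin (N + 1))
    (l : ℤ) (ω : Ω) : ℤ :=
  if 0 ≤ l then ∑ i ∈ Finset.range l.toNat, n (ε (i : ℤ) ω)
  else -∑ i ∈ Finset.range (-l).toNat, n (ε (-(i : ℤ) - 1) ω)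

open Asymptotics Topology SummationFilter

lemma AddCircle.norm_coe_le_abs_sub_intCast (x : ℝ) (z : ℤ) :
    ‖(x : AddCircle (1 : ℝ))‖ ≤ |x - z| := by
  rw [AddCircle.norm_eq]
  simpa using round_le x z

namespace IntermediateField

def ofRealEmbedding (K : IntermediateField ℚ ℝ) : K →ₐ[ℚ] ℂ :=
  (Complex.ofRealAm.restrictScalars ℚ).comp K.val

open Classical in
lemma abs_sub_trace_le_sum_norm_embedding (K : IntermediateField ℚ ℝ) [FiniteDimensional ℚ K]
    (x : K) :
    |(x : ℝ) - Algebra.trace ℚ K x| ≤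
      ∑ σ ∈ Finset.univ.erase K.ofRealEmbedding, ‖σ x‖ := by
  have htrace := trace_eq_sum_embeddings (E := ℂ) (K := ℚ) (L := K) (x := x)
  rw [← Finset.add_sum_erase _ _ (Finset.mem_univ K.ofRealEmbedding)] at htrace
  have hdiff : (((x : ℝ) - Algebra.trace ℚ K x : ℝ) : ℂ) =
      -∑ σ ∈ Finset.univ.erase K.ofRealEmbedding, σ x := by
    have hx : K.ofRealEmbedding x = ((x : ℝ) : ℂ) := rfl
    rw [hx, eq_ratCast] at htrace
    push_cast at htrace ⊢
    linear_combination -htrace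
  rw [← Real.norm_eq_abs, ← Complex.norm_real, hdiff, norm_neg]
  exact norm_sum_le _ _

end IntermediateField

lemma IsPisot.norm_embedding_gen_lt_one {θ : ℝ} (hθ : IsPisot θ) (σ : ℚ⟮θ⟯ →ₐ[ℚ] ℂ)
    (hσ : σ ≠ ℚ⟮θ⟯.ofRealEmbedding) : ‖σ (AdjoinSimple.gen ℚ θ)‖ < 1 := by
  refine hθ.2.2 _ ?_ fun h => hσ (adjoin_algHom_ext ℚ fun x hx => ?_)
  · rw [← minpoly_gen, Polynomial.aeval_algHom_apply]
    exact (congrArg σ (minpoly.aeval ℚ _)).trans (map_zero σ)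
  · rcases hx with rfl
    exact h

lemma Finset.exists_pos_lt_one_forall_le {ι : Type*} (s : Finset ι) (f : ι → ℝ)
    (hf : ∀ i ∈ s, f i < 1) : ∃ ρ, 0 < ρ ∧ ρ < 1 ∧ ∀ i ∈ s, f i ≤ ρ := by
  induction s using Finset.cons_induction with
  | empty => exact ⟨1 / 2, by norm_num, by norm_num, by simp⟩
  | cons a s _ ih =>
    obtain ⟨ρ, hρ0, hρ1, hle⟩ := ih fun i hi => hf i (mem_cons_of_mem hi)
    refine ⟨max (f a) ρ, lt_max_of_lt_right hρ0, max_lt (hf a (mem_cons_self a s)) hρ1, ?_⟩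
    simp only [forall_mem_cons]
    exact ⟨le_max_left _ _, fun i hi => (hle i hi).trans (le_max_right _ _)⟩

open Classical in
theorem IsPisot.exists_isBigO_coe_mul_zpow {θ : ℝ} (hθ : IsPisot θ) :
    ∃ ρ : ℝ, 0 < ρ ∧ ρ < 1 ∧ ∀ α ∈ traceSet θ,
      (fun m : ℤ => ((α * θ ^ m : ℝ) : AddCircle (1 : ℝ))) =O[atTop] (fun m => ρ ^ m) := by
  have : FiniteDimensional ℚ ℚ⟮θ⟯ := adjoin.finiteDimensional hθ.2.1.tower_top
  set θ' := AdjoinSimple.gen ℚ θ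
  set conj := univ.erase ℚ⟮θ⟯.ofRealEmbedding
  obtain ⟨ρ, hρ0, hρ1, hρ⟩ := conj.exists_pos_lt_one_forall_le (fun σ => ‖σ θ'‖)
    fun σ hσ => hθ.norm_embedding_gen_lt_one σ (ne_of_mem_erase hσ)
  refine ⟨ρ, hρ0, hρ1, fun α ⟨hα, M, hM⟩ => IsBigO.of_bound (∑ σ ∈ conj, ‖σ ⟨α, hα⟩‖) ?_⟩
  filter_upwards [eventually_ge_atTop (M : ℤ)] with m hm
  lift m to ℕ using (by omega)
  obtain ⟨z, hz⟩ := hM m (by exact_mod_cast hm)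
  have hcoe : ((θ' ^ m * ⟨α, hα⟩ : ℚ⟮θ⟯) : ℝ) = α * θ ^ m := mul_comm _ _
  calc ‖((α * θ ^ (m : ℤ) : ℝ) : AddCircle (1 : ℝ))‖ ≤ |α * θ ^ m - z| := by
        rw [zpow_natCast]; exact AddCircle.norm_coe_le_abs_sub_intCast _ _
    _ ≤ ∑ σ ∈ conj, ‖σ (θ' ^ m * ⟨α, hα⟩)‖ := by
        rw [← hcoe, ← Rat.cast_intCast, ← hz]
        exact abs_sub_trace_le_sum_norm_embedding _ _
    _ ≤ ∑ σ ∈ conj, ρ ^ m * ‖σ ⟨α, hα⟩‖ := sum_le_sum fun σ hσ => by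
        rw [map_mul, map_pow, norm_mul, norm_pow]
        gcongr
        exact hρ σ hσ
    _ = (∑ σ ∈ conj, ‖σ ⟨α, hα⟩‖) * ‖ρ ^ (m : ℤ)‖ := by
        rw [← mul_sum, zpow_natCast, norm_pow, Real.norm_of_nonneg hρ0.le, mul_comm]

lemma tendsto_const_add_div_natCast {s : ℕ → ℝ} {c : ℝ} (a : ℝ)
    (hs : Tendsto (fun L : ℕ => s L / L) atTop (𝓝 c)) :
    Tendsto (fun L : ℕ => (a + s L) / L) atTop (𝓝 c) := by
  simpa [add_div] using (tendsto_const_div_atTop_nhds_zero_nat a).add hs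

lemma eventually_mul_le_of_tendsto_div {t : ℕ → ℝ} {c c' : ℝ} (hc : c' < c)
    (ht : Tendsto (fun L : ℕ => t L / L) atTop (𝓝 c)) : ∀ᶠ L : ℕ in atTop, c' * L ≤ t L := by
  filter_upwards [ht.eventually (eventually_gt_nhds hc), eventually_gt_atTop 0] with L hL hL0
  exact ((lt_div_iff₀ (by exact_mod_cast hL0)).mp hL).le

lemma summable_norm_comp_of_isBigO_zpow {E : Type*} [SeminormedAddCommGroup E] {f : ℤ → E}
    {ρ : ℝ} (hρ0 : 0 < ρ) (hρ1 : ρ < 1) (hf : f =O[atTop] (fun m => ρ ^ m)) {t : ℕ → ℤ}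
    {c : ℝ} (hc : 0 < c) (ht : Tendsto (fun L : ℕ => (t L : ℝ) / L) atTop (𝓝 c)) :
    Summable fun L => ‖f (t L)‖ := by
  have hlin := eventually_mul_le_of_tendsto_div (half_lt_self hc) ht
  have ht_top : Tendsto t atTop atTop := tendsto_intCast_atTop_iff.mp <|
    tendsto_atTop_mono' _ hlin (tendsto_natCast_atTop_atTop.const_mul_atTop (half_pos hc))
  have hgeom : Summable fun L : ℕ => (ρ ^ (c / 2)) ^ L :=
    summable_geometric_of_lt_one (by positivity) (Real.rpow_lt_one hρ0.le hρ1 (half_pos hc))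
  refine summable_of_isBigO_nat hgeom ((hf.comp_tendsto ht_top).norm_left.trans ?_)
  refine IsBigO.of_bound 1 ?_
  filter_upwards [hlin] with L hL
  rw [one_mul, Function.comp_apply, Real.norm_of_nonneg (zpow_pos hρ0 _).le,
    Real.norm_of_nonneg (pow_pos (Real.rpow_pos_of_pos hρ0 _) _).le, ← Real.rpow_intCast,
    ← Real.rpow_natCast, ← Real.rpow_mul hρ0.le]
  exact Real.rpow_le_rpow_of_exponent_ge hρ0 hρ1.le hL

lemma summable_norm_comp_of_forall_isBigO_zpow {ι E : Type*} [Fintype ι]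
    [SeminormedAddCommGroup E] {f : ι → ℤ → E} {ρ : ℝ} (hρ0 : 0 < ρ) (hρ1 : ρ < 1)
    (hf : ∀ i, f i =O[atTop] (fun m => ρ ^ m)) (e : ℕ → ι) {t : ℕ → ℤ} {c : ℝ} (hc : 0 < c)
    (ht : Tendsto (fun L : ℕ => (t L : ℝ) / L) atTop (𝓝 c)) :
    Summable fun L => ‖f (e L) (t L)‖ :=
  (summable_sum fun i _ =>
    summable_norm_comp_of_isBigO_zpow hρ0 hρ1 (hf i) hc ht).of_nonneg_of_le
    (fun _ => norm_nonneg _) fun L =>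
      single_le_sum (f := fun i => ‖f i (t L)‖) (fun _ _ => norm_nonneg _) (mem_univ _)

section StrongLaw

variable {Ω α : Type*} {mΩ : MeasurableSpace Ω} {P : Measure Ω}
  [Fintype α] [MeasurableSpace α] [MeasurableSingletonClass α]

lemma integral_comp_eq_sum_of_law [IsFiniteMeasure P] {p : α → ℝ} (hp : ∀ a, 0 ≤ p a)
    {ζ : Ω → α} (hζ : Measurable ζ) (hlaw : ∀ a, P {ω | ζ ω = a} = ENNReal.ofReal (p a))
    (h : α → ℝ) :
    ∫ ω, h (ζ ω) ∂P = ∑ a, p a * h a := by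
  rw [← integral_map hζ.aemeasurable (measurable_of_countable h).aestronglyMeasurable,
    integral_fintype Integrable.of_finite]
  refine sum_congr rfl fun a _ => ?_
  rw [measureReal_def, Measure.map_apply hζ (measurableSet_singleton a)]
  simp only [Set.preimage, Set.mem_singleton_iff, hlaw, ENNReal.toReal_ofReal (hp a), smul_eq_mul]

lemma identDistrib_of_measure_eq {ζ η : Ω → α} (hζ : Measurable ζ) (hη : Measurable η)
    (h : ∀ a, P {ω | ζ ω = a} = P {ω | η ω = a}) : IdentDistrib ζ η P P := by
  refine ⟨hζ.aemeasurable, hη.aemeasurable, Measure.ext_of_singleton fun a => ?_⟩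
  rw [Measure.map_apply hζ (measurableSet_singleton a),
    Measure.map_apply hη (measurableSet_singleton a)]
  exact h a

theorem ae_tendsto_sum_div_of_iIndepFun [IsFiniteMeasure P] {ι : Type*} {p : α → ℝ}
    (hp : ∀ a, 0 ≤ p a) {ε : ι → Ω → α} (hmeas : ∀ i, Measurable (ε i)) (hindep : iIndepFun ε P)
    (hlaw : ∀ i a, P {ω | ε i ω = a} = ENNReal.ofReal (p a)) {φ : ℕ → ι}
    (hφ : φ.Injective) (h : α → ℝ) :
    ∀ᵐ ω ∂P, Tendsto (fun L : ℕ => (∑ i ∈ range L, h (ε (φ i) ω)) / L) atTop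
      (𝓝 (∑ a, p a * h a)) := by
  have hh : Measurable h := measurable_of_countable h
  have hint : Integrable (h ∘ ε (φ 0)) P :=
    Integrable.of_finite.comp_measurable (hmeas _)
  have hindep' : Pairwise (Function.onFun (· ⟂ᵢ[P] ·) fun i => h ∘ ε (φ i)) :=
    fun i j hij => (hindep.indepFun (hφ.ne hij)).comp hh hh
  have hident (i : ℕ) : IdentDistrib (h ∘ ε (φ i)) (h ∘ ε (φ 0)) P P :=
    (identDistrib_of_measure_eq (hmeas _) (hmeas _) fun a => by rw [hlaw, hlaw]).comp hh
  simpa [integral_comp_eq_sum_of_law hp (hmeas _) (hlaw _) h] using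
    strong_law_ae_real _ hint hindep' hident

end StrongLaw

section Cocycle

variable {N : ℕ} {Ω : Type*} (n : Fin (N + 1) → ℤ) (ε : ℤ → Ω → Fin (N + 1)) (ω : Ω)

lemma cocy_natCast (L : ℕ) : cocy n ε L ω = ∑ i ∈ range L, n (ε i ω) := by
  simp [cocy]

lemma cocy_neg_natCast (L : ℕ) : cocy n ε (-L) ω = -∑ i ∈ range L, n (ε (-i - 1) ω) := by
  rcases L.eq_zero_or_pos with rfl | hL
  · simp [cocy]
  · simp [cocy, hL.ne']

end Cocycle

theorem stmt7_general {N : ℕ} (lam : ℝ) (hlam : 0 < lam)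
    (hPisot : IsPisot lam⁻¹)
    (n : Fin (N + 1) → ℤ)
    (μ : Fin (N + 1) → ℝ) (hμ : ∀ k, μ k ∈ traceSet lam⁻¹)
    (p : Fin (N + 1) → ℝ) (hp : ∀ j, 0 < p j)
    (hdrift : 0 < ∑ j, p j * (n j : ℝ))
    (Ω : Type*) [MeasureSpace Ω] [IsProbabilityMeasure (ℙ : Measure Ω)]
    (ε : ℤ → Ω → Fin (N + 1)) (hmeas : ∀ l, Measurable (ε l))
    (hindep : iIndepFun ε ℙ)
    (hlaw : ∀ l k, (ℙ : Measure Ω) {ω | ε l ω = k} = ENNReal.ofReal (p k)) :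
    ∀ k : ℤ, ∀ᵐ ω ∂ℙ, ∃ z : AddCircle (1 : ℝ),
      Tendsto (fun L : ℕ =>
          ((∑ l ∈ Finset.Icc (-(L : ℤ)) (L : ℤ),
            μ (ε l ω) * lam ^ (k + cocy n ε l ω) : ℝ) : AddCircle (1 : ℝ)))
        atTop (nhds z) := by
  intro k
  obtain ⟨ρ, hρ0, hρ1, hdecay⟩ := hPisot.exists_isBigO_coe_mul_zpow
  have hlam1 : lam < 1 := (one_lt_inv₀ hlam).mp hPisot.1
  have hp0 (j : Fin (N + 1)) : 0 ≤ p j := (hp j).le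
  have hfwd := ae_tendsto_sum_div_of_iIndepFun hp0 hmeas hindep hlaw Nat.cast_injective
    fun j => (n j : ℝ)
  have hbwd := ae_tendsto_sum_div_of_iIndepFun hp0 hmeas hindep hlaw
    (φ := fun i : ℕ => -(i : ℤ) - 1) (fun a b h => by simpa using h) fun j => (n j : ℝ)
  filter_upwards [hfwd, hbwd] with ω hX hY
  set g : ℤ → AddCircle (1 : ℝ) := fun l => ((μ (ε l ω) * lam ^ (k + cocy n ε l ω) : ℝ) : _)
  suffices hg : Summable fun l => ‖g l‖ by
    obtain ⟨z, hz⟩ := hg.of_norm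
    exact ⟨z, by simpa [g] using hasSum_symmetricIcc_iff.mp (hz.mono_left le_atTop)⟩
  refine summable_int_iff_summable_nat_and_neg.mpr ⟨?_, ?_⟩
  · refine summable_norm_comp_of_forall_isBigO_zpow
      (f := fun j m => ((μ j * lam ^ m : ℝ) : AddCircle (1 : ℝ))) hlam hlam1 (fun j => ?_)
      (fun L => ε L ω) (t := fun L : ℕ => k + cocy n ε L ω) hdrift ?_
    · exact (isBigO_of_le _ fun m => QuotientAddGroup.norm_mk_le_norm).trans
        (isBigO_const_mul_self _ _ _)
    · simpa [cocy_natCast] using tendsto_const_add_div_natCast k hX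
  · -- `λ ^ (k + S_{-L}) = θ ^ m` with `m = -(k + S_{-L})` growing linearly
    have := summable_norm_comp_of_forall_isBigO_zpow
      (f := fun j m => ((μ j * lam⁻¹ ^ m : ℝ) : AddCircle (1 : ℝ))) hρ0 hρ1
      (fun j => hdecay _ (hμ j)) (fun L : ℕ => ε (-L) ω)
      (t := fun L : ℕ => -(k + cocy n ε (-L) ω)) hdrift ?_
    · simpa only [inv_zpow', neg_neg] using this
    · simpa [cocy_neg_natCast, add_comm] using tendsto_const_add_div_natCast (-k) hY

/-- In the Pisot-form setting, for every `k ∈ ℤ`, almost surely the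
symmetric partial sums `∑_{-L ≤ l ≤ L} μ (ε l) λ^{k + S_l} mod 1` converge in the
torus `𝕋 = ℝ/ℤ`; i.e. the random variable `Z_k = ∑_{l ∈ ℤ} μ (ε l) λ^{k+S_l} mod 1`
is well defined. -/
theorem stmt7 {N : ℕ} (hN : 1 ≤ N) (lam : ℝ) (hlam : 0 < lam)
    (hPisot : IsPisot lam⁻¹)
    (n : Fin (N + 1) → ℤ) (hgcd : Finset.univ.gcd n = 1)
    (μ : Fin (N + 1) → ℝ) (hμ : ∀ k, μ k ∈ traceSet lam⁻¹)
    (p : Fin (N + 1) → ℝ) (hp : ∀ j, 0 < p j) (hp1 : ∑ j, p j = 1)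
    (hdrift : 0 < ∑ j, p j * (n j : ℝ))
    (Ω : Type*) [MeasureSpace Ω] [IsProbabilityMeasure (ℙ : Measure Ω)]
    (ε : ℤ → Ω → Fin (N + 1)) (hmeas : ∀ l, Measurable (ε l))
    (hindep : iIndepFun ε ℙ)
    (hlaw : ∀ l k, (ℙ : Measure Ω) {ω | ε l ω = k} = ENNReal.ofReal (p k)) :
    ∀ k : ℤ, ∀ᵐ ω ∂ℙ, ∃ z : AddCircle (1 : ℝ),
      Tendsto (fun L : ℕ =>
          ((∑ l ∈ Finset.Icc (-(L : ℤ)) (L : ℤ),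
            μ (ε l ω) * lam ^ (k + cocy n ε l ω) : ℝ) : AddCircle (1 : ℝ)))
        atTop (nhds z) :=
  stmt7_general lam hlam hPisot n μ hμ p hp hdrift Ω ε hmeas hindep hlaw
end
end

section
/- Let 1/λ > 1 be a Pisot number, d ≥ 1 an integer, and μ ∈ T(1/λ). Then the two-sided series Σ_{l∈ℤ} μ λ^{ld} mod 1 — i.e. the limit in 𝕋 = ℝ/ℤ of the symmetric partial sums Σ_{−L≤l≤L} μ λ^{ld} mod 1, which exists — is equal, in 𝕋, to a rational number; explicitly, it equals −Tr_{1/λ}( μ λ^{−(l_0+1)d} / (1 − λ^{−d}) ) mod 1, where l_0 ≥ 1 is any integer such that Tr_{1/λ}(λ^{−l} μ) ∈ ℤ for all l > l_0. -/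
open MeasureTheory Filter Finset IntermediateField

noncomputable section

/-! Put `θ = λ⁻¹`, `β = μ / (1 - θ^d)` and `x_L = θ^((L+1)d) β` in `ℚ(θ)`. Summing the geometric
series, `∑_{|l| ≤ L} μ λ^(ld) = β λ^(Ld) - x_L`. All conjugates of `θ` other than `θ` lie in the
open unit disc, so `Tr x_L - x_L → 0`. Moreover `x_L - x_(L+1) = θ^((L+1)d) μ` has integral trace
once `(L+1)d > l₀`, so `Tr x_L ≡ Tr x_(l₀) (mod 1)` for `L ≥ l₀`. Hence the partial sums converge
in `ℝ/ℤ` to `-Tr x_(l₀)`. -/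

open Topology

theorem sum_Icc_neg_zpow_mul_one_sub_inv {𝕜 : Type*} [Field 𝕜] {q : 𝕜} (hq : q ≠ 0) (L : ℕ) :
    (∑ l ∈ Icc (-(L : ℤ)) L, q ^ l) * (1 - q⁻¹) = q ^ L - q⁻¹ ^ (L + 1) := by
  induction L with
  | zero => simp
  | succ L ih =>
    have hIcc : Icc (-((L + 1 : ℕ) : ℤ)) ((L + 1 : ℕ) : ℤ)
        = insert ((L : ℤ) + 1) (insert (-(L : ℤ) - 1) (Icc (-(L : ℤ)) L)) := by
      rw [Finset.insert_Icc_left_eq_Icc_sub_one (by omega),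
        Finset.insert_Icc_right_eq_Icc_add_one (by omega)]
      push_cast; ring_nf
    rw [hIcc, sum_insert (by simp; omega), sum_insert (by simp), add_mul, add_mul, ih]
    simp only [zpow_add₀ hq, zpow_sub₀ hq, zpow_neg, zpow_natCast, zpow_one, inv_pow]
    field_simp
    ring

theorem sum_Icc_mul_zpow_mul_eq {𝕜 : Type*} [Field 𝕜] {a : 𝕜} (ha : a ≠ 0) {d : ℕ}
    (hd : a⁻¹ ^ d ≠ 1) (μ : 𝕜) (L : ℕ) :
    ∑ l ∈ Icc (-(L : ℤ)) L, μ * a ^ (l * (d : ℤ)) =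
      μ / (1 - a⁻¹ ^ d) * (a ^ d) ^ L - a⁻¹ ^ ((L + 1) * d) * μ / (1 - a⁻¹ ^ d) := by
  have hgeom := sum_Icc_neg_zpow_mul_one_sub_inv (pow_ne_zero d ha) L
  rw [← inv_pow] at hgeom
  simp only [← mul_sum, zpow_mul', zpow_natCast, pow_mul']
  rw [eq_comm, div_mul_eq_mul_div, ← sub_div, div_eq_iff (sub_ne_zero.mpr hd.symm)]
  linear_combination (-μ) * hgeom

theorem tendsto_algebraMap_trace_mul_pow_sub {F K : Type*} [Field F] [Field K] [Algebra F K]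
    [FiniteDimensional F K] [Algebra.IsSeparable F K] [Algebra F ℂ] (φ : K →ₐ[F] ℂ) {t : K}
    (ht : ∀ σ : K →ₐ[F] ℂ, σ ≠ φ → ‖σ t‖ < 1) (β : K) :
    Tendsto (fun n : ℕ => algebraMap F ℂ (Algebra.trace F K (β * t ^ n)) - φ (β * t ^ n))
      atTop (𝓝 0) := by
  classical
  have hsum : ∀ n : ℕ, algebraMap F ℂ (Algebra.trace F K (β * t ^ n)) - φ (β * t ^ n)
      = ∑ σ ∈ univ.erase φ, σ β * σ t ^ n := fun n => by
    rw [trace_eq_sum_embeddings, ← add_sum_erase _ _ (mem_univ φ), add_sub_cancel_left]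
    simp only [map_mul, map_pow]
  have := tendsto_finsetSum (univ.erase φ) fun σ hσ =>
    (tendsto_pow_atTop_nhds_zero_of_norm_lt_one (ht σ (ne_of_mem_erase hσ))).const_mul (σ β)
  simp only [mul_zero, sum_const_zero] at this
  exact this.congr fun n => (hsum n).symm

def realEmbedding (θ : ℝ) : ℚ⟮θ⟯ →ₐ[ℚ] ℂ :=
  (Complex.ofRealAm.restrictScalars ℚ).comp (ℚ⟮θ⟯).val

@[simp]
theorem realEmbedding_apply (θ : ℝ) (x : ℚ⟮θ⟯) : realEmbedding θ x = ((x : ℝ) : ℂ) := rfl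

theorem IsPisot.norm_gen_lt_one {θ : ℝ} (hθ : IsPisot θ) (σ : ℚ⟮θ⟯ →ₐ[ℚ] ℂ)
    (hσ : σ ≠ realEmbedding θ) : ‖σ (AdjoinSimple.gen ℚ θ)‖ < 1 := by
  refine hθ.2.2 _ ?_ fun h => hσ (adjoin_algHom_ext ℚ ?_)
  · rw [Polynomial.aeval_algHom_apply]
    convert map_zero σ
    exact aeval_gen_minpoly ℚ θ
  · rintro x (rfl : x = θ)
    exact h

theorem IsPisot.tendsto_trace_mul_pow_sub {θ : ℝ} (hθ : IsPisot θ) (β : ℚ⟮θ⟯) :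
    Tendsto (fun n : ℕ => (Algebra.trace ℚ ℚ⟮θ⟯ (β * AdjoinSimple.gen ℚ θ ^ n) : ℝ)
      - (β * AdjoinSimple.gen ℚ θ ^ n : ℚ⟮θ⟯)) atTop (𝓝 0) := by
  have : FiniteDimensional ℚ ℚ⟮θ⟯ := adjoin.finiteDimensional hθ.2.1.tower_top
  simpa [Function.comp_def, ← Complex.ofReal_pow] using (Complex.continuous_re.tendsto 0).comp
    (tendsto_algebraMap_trace_mul_pow_sub _ hθ.norm_gen_lt_one β)

theorem coe_trace_pow_mul_div_one_sub_pow_eq_of_le {K : Type*} [Field K] [Algebra ℚ K]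
    {t m : K} {d l0 : ℕ} (hd : 1 ≤ d) (htd : t ^ d ≠ 1)
    (hTr : ∀ l : ℕ, l0 < l → ∃ z : ℤ, Algebra.trace ℚ K (t ^ l * m) = z) {L : ℕ} (hL : l0 ≤ L) :
    ((Algebra.trace ℚ K (t ^ ((L + 1) * d) * m / (1 - t ^ d)) : ℝ) : AddCircle (1 : ℝ)) =
      (Algebra.trace ℚ K (t ^ ((l0 + 1) * d) * m / (1 - t ^ d)) : ℝ) := by
  induction L, hL using Nat.le_induction with
  | base => rfl
  | succ L hL ih =>
    obtain ⟨z, hz⟩ := hTr ((L + 1) * d) (by nlinarith)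
    have hstep : t ^ ((L + 1 + 1) * d) * m / (1 - t ^ d)
        = t ^ ((L + 1) * d) * m / (1 - t ^ d) - t ^ ((L + 1) * d) * m := by
      field_simp [sub_ne_zero.mpr htd.symm]
      ring
    rw [← ih, hstep, map_sub, hz, Rat.cast_sub, Rat.cast_intCast, AddCircle.coe_sub,
      sub_eq_self, AddCircle.coe_eq_zero_iff]
    exact ⟨z, by simp⟩

theorem stmt16_general (lam : ℝ) (hPisot : IsPisot lam⁻¹)
    (d : ℕ) (hd : 1 ≤ d) (μ : ℝ) (hμmem : μ ∈ ℚ⟮lam⁻¹⟯)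
    (l0 : ℕ)
    (hTr : ∀ l : ℕ, l0 < l → ∃ z : ℤ,
      Algebra.trace ℚ ℚ⟮lam⁻¹⟯
        ((⟨lam⁻¹, IntermediateField.mem_adjoin_simple_self ℚ lam⁻¹⟩ : ℚ⟮lam⁻¹⟯) ^ l *
          ⟨μ, hμmem⟩) = (z : ℚ)) :
    Tendsto
      (fun L : ℕ => ((∑ l ∈ Finset.Icc (-(L : ℤ)) (L : ℤ),
          μ * lam ^ (l * (d : ℤ)) : ℝ) : AddCircle (1 : ℝ)))
      atTop
      (nhds ((((-(Algebra.trace ℚ ℚ⟮lam⁻¹⟯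
        (((⟨lam⁻¹, IntermediateField.mem_adjoin_simple_self ℚ lam⁻¹⟩ : ℚ⟮lam⁻¹⟯) ^ ((l0 + 1) * d) *
            ⟨μ, hμmem⟩) /
          (1 - (⟨lam⁻¹, IntermediateField.mem_adjoin_simple_self ℚ lam⁻¹⟩ : ℚ⟮lam⁻¹⟯) ^ d)))
        : ℚ) : ℝ) : AddCircle (1 : ℝ)))) := by
  set t : ℚ⟮lam⁻¹⟯ := AdjoinSimple.gen ℚ lam⁻¹
  set m : ℚ⟮lam⁻¹⟯ := ⟨μ, hμmem⟩
  set x : ℕ → ℚ⟮lam⁻¹⟯ := fun L => t ^ ((L + 1) * d) * m / (1 - t ^ d)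
  have hθ : 1 < lam⁻¹ ^ d := one_lt_pow₀ hPisot.1 (by omega)
  have hlam : 0 < lam := inv_pos.mp (one_pos.trans hPisot.1)
  have htd : t ^ d ≠ 1 := fun h => hθ.ne' (by simpa [t] using congrArg Subtype.val h)
  have hsum : ∀ L : ℕ, ∑ l ∈ Icc (-(L : ℤ)) L, μ * lam ^ (l * (d : ℤ))
      = (m / (1 - t ^ d) : ℝ) * (lam ^ d) ^ L - (x L : ℝ) := fun L => by
    rw [sum_Icc_mul_zpow_mul_eq hlam.ne' hθ.ne' μ L]
    simp [x, t, m]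
  have hconj : Tendsto (fun L => (Algebra.trace ℚ _ (x L) : ℝ) - (x L : ℝ)) atTop (𝓝 0) := by
    have hx : ∀ L, x L = m / (1 - t ^ d) * t ^ ((L + 1) * d) := fun L => by ring
    refine ((hPisot.tendsto_trace_mul_pow_sub (m / (1 - t ^ d))).comp
      ((tendsto_id.atTop_mul_const' (by omega : 0 < d)).comp (tendsto_add_atTop_nat 1))).congr
      fun L => ?_
    rw [hx]
    rfl
  have hpow : Tendsto (fun L : ℕ => (lam ^ d) ^ L) atTop (𝓝 0) :=
    tendsto_pow_atTop_nhds_zero_of_lt_one (pow_nonneg hlam.le d)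
      ((one_lt_inv₀ (pow_pos hlam d)).mp (by rwa [← inv_pow]))
  have hcirc : ∀ᶠ L in atTop, ((Algebra.trace ℚ _ (x L) : ℝ) : AddCircle (1 : ℝ))
      = (Algebra.trace ℚ _ (x l0) : ℝ) :=
    eventually_atTop.2 ⟨l0, fun L hL => coe_trace_pow_mul_div_one_sub_pow_eq_of_le hd htd hTr hL⟩
  have hvanish : Tendsto (fun L => (m / (1 - t ^ d) : ℝ) * (lam ^ d) ^ L
      + ((Algebra.trace ℚ _ (x L) : ℝ) - (x L : ℝ))) atTop (𝓝 0) := by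
    simpa using (hpow.const_mul _).add hconj
  have hmk : Continuous ((↑) : ℝ → AddCircle (1 : ℝ)) := AddCircle.continuous_mk' 1
  have hlim := ((hmk.tendsto 0).comp hvanish).sub_const
    ((Algebra.trace ℚ _ (x l0) : ℝ) : AddCircle (1 : ℝ))
  rw [AddCircle.coe_zero, zero_sub] at hlim
  convert hlim.congr' (hcirc.mono fun L hL => ?_) using 2
  · push_cast
    rfl
  · rw [Function.comp_apply, ← hL, ← AddCircle.coe_sub, hsum]
    congr 1
    ring

/-- Lemma of Section 5. Let `1/λ > 1` be a Pisot number, `d ≥ 1`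
and `μ ∈ T(1/λ)` (witnessed by `μ ∈ ℚ(1/λ)` and `l0 ≥ 1` with `Tr((1/λ)^l μ) ∈ ℤ` for
`l > l0`). Then the symmetric partial sums of `∑_{l ∈ ℤ} μ λ^{l d} mod 1` converge in
`𝕋 = ℝ/ℤ` to the rational number `- Tr( μ λ^{-(l0+1)d} / (1 - λ^{-d}) ) mod 1`. -/
theorem stmt16 (lam : ℝ) (hlam : 0 < lam) (hPisot : IsPisot lam⁻¹)
    (d : ℕ) (hd : 1 ≤ d) (μ : ℝ) (hμmem : μ ∈ ℚ⟮lam⁻¹⟯)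
    (l0 : ℕ) (hl0 : 1 ≤ l0)
    (hTr : ∀ l : ℕ, l0 < l → ∃ z : ℤ,
      Algebra.trace ℚ ℚ⟮lam⁻¹⟯
        ((⟨lam⁻¹, IntermediateField.mem_adjoin_simple_self ℚ lam⁻¹⟩ : ℚ⟮lam⁻¹⟯) ^ l *
          ⟨μ, hμmem⟩) = (z : ℚ)) :
    Tendsto
      (fun L : ℕ => ((∑ l ∈ Finset.Icc (-(L : ℤ)) (L : ℤ),
          μ * lam ^ (l * (d : ℤ)) : ℝ) : AddCircle (1 : ℝ)))
      atTop
      (nhds ((((-(Algebra.trace ℚ ℚ⟮lam⁻¹⟯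
        (((⟨lam⁻¹, IntermediateField.mem_adjoin_simple_self ℚ lam⁻¹⟩ : ℚ⟮lam⁻¹⟯) ^ ((l0 + 1) * d) *
            ⟨μ, hμmem⟩) /
          (1 - (⟨lam⁻¹, IntermediateField.mem_adjoin_simple_self ℚ lam⁻¹⟩ : ℚ⟮lam⁻¹⟯) ^ d)))
        : ℚ) : ℝ) : AddCircle (1 : ℝ)))) :=
  stmt16_general lam hPisot d hd μ hμmem l0 hTr
end
end
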